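/- arXiv:1811.03439 — 7 statements merged into one kernel-verified Lean document; each statement's English description precedes it below -/
import Mathlib

section
/- For every γ > 0 and every lower semicontinuous function f : V → [0,∞], the quadratic envelope of f equals the twice-iterated S-transform of f; that is, for all x ∈ V, Q_γ(f)(x) = S_γ(S_γ(f))(x), equivalently Q_γ(f)(x) = sup_{y∈V} [ (inf_{w∈V} ( f(w) + (γ/2)‖w−y‖² )) − (γ/2)‖x−y‖² ]. -/
variable {V : Type*} [NormedAddCommGroup V] [InnerProductSpace ℝ V] [CompleteSpace V]
  [TopologicalSpace.SeparableSpace V]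

/-- The quadratic envelope `Q_γ(f)`:
`Q_γ(f)(x) = sup { α − (γ/2)‖x−y‖² : α ∈ ℝ, y ∈ V, α − (γ/2)‖·−y‖² ≤ f }`. -/
noncomputable def Qenv (γ : ℝ) (f : V → EReal) (x : V) : EReal :=
  sSup {v : EReal | ∃ α : ℝ, ∃ y : V,
    (∀ z : V, ((α - γ / 2 * ‖z - y‖ ^ 2 : ℝ) : EReal) ≤ f z) ∧
      v = ((α - γ / 2 * ‖x - y‖ ^ 2 : ℝ) : EReal)}

/-- The transform `S_γ(f)(y) = sup_x ( −f(x) − (γ/2)‖x−y‖² )`. -/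
noncomputable def Senv (γ : ℝ) (f : V → EReal) (y : V) : EReal :=
  ⨆ x : V, (-(f x) - ((γ / 2 * ‖x - y‖ ^ 2 : ℝ) : EReal))

/-- Convexity for extended-real-valued functions. -/
def ERealConvex (g : V → EReal) : Prop :=
  ∀ x y : V, ∀ a b : ℝ, 0 ≤ a → 0 ≤ b → a + b = 1 →
    g (a • x + b • y) ≤ (a : EReal) * g x + (b : EReal) * g y

/-- The lower semicontinuous convex envelope: the (pointwise) greatest lower semicontinuous
convex minorant of `g`. -/
noncomputable def convEnv (g : V → EReal) (x : V) : EReal :=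
  ⨆ h : {h : V → EReal // LowerSemicontinuous h ∧ ERealConvex h ∧ ∀ z, h z ≤ g z}, h.1 x

/-- Lower semicontinuity with respect to the weak topology of `V`. -/
def WeaklyLSC (g : V → EReal) : Prop :=
  LowerSemicontinuous (fun x : WeakSpace ℝ V => g x)

/-- `h` is coercive iff all its sublevel sets are bounded. -/
def Coercive (h : V → EReal) : Prop :=
  ∀ c : ℝ, Bornology.IsBounded {x : V | h x ≤ (c : EReal)}

/-! The quadratics `α − (γ/2)‖· − y‖²` below `f` with vertex `y` are exactly those whose height
`α` is at most the Moreau envelope `m(y) = inf_w (f w + (γ/2)‖w − y‖²)`. Taking the supremum of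
these quadratics over `α` and `y` gives `Q_γ(f)(x) = sup_y (m(y) − (γ/2)‖x − y‖²)`, and
`S_γ(f) = −m` turns this into `S_γ(S_γ(f))(x)`. -/

section MoreauEnvelope

variable {E : Type*} [NormedAddCommGroup E]

noncomputable def moreauEnv (γ : ℝ) (f : E → EReal) (y : E) : EReal :=
  ⨅ w : E, (f w + ((γ / 2 * ‖w - y‖ ^ 2 : ℝ) : EReal))

theorem coe_le_moreauEnv_iff {γ α : ℝ} {f : E → EReal} {y : E} :
    (α : EReal) ≤ moreauEnv γ f y ↔
      ∀ z : E, ((α - γ / 2 * ‖z - y‖ ^ 2 : ℝ) : EReal) ≤ f z := by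
  simp only [moreauEnv, le_iInf_iff, EReal.coe_sub]
  exact forall_congr' fun z =>
    (EReal.sub_le_iff_le_add (.inl (EReal.coe_ne_bot _)) (.inl (EReal.coe_ne_top _))).symm

theorem senv_eq_neg_moreauEnv (γ : ℝ) (f : E → EReal) (y : E) :
    Senv γ f y = -moreauEnv γ f y := by
  have neg_sub_coe (a : EReal) (c : ℝ) : -a - c = -(a + c) := by
    rw [EReal.neg_add (.inr (EReal.coe_ne_top c)) (.inr (EReal.coe_ne_bot c)), sub_eq_add_neg]
  simp only [Senv, moreauEnv, neg_sub_coe]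
  exact (EReal.negOrderIso.map_iInf _).symm

theorem qenv_eq_iSup_moreauEnv_sub (γ : ℝ) (f : E → EReal) (x : E) :
    Qenv γ f x = ⨆ y : E, (moreauEnv γ f y - ((γ / 2 * ‖x - y‖ ^ 2 : ℝ) : EReal)) := by
  refine le_antisymm (sSup_le ?_) (iSup_le fun y => ?_)
  · rintro _ ⟨α, y, hα, rfl⟩
    refine le_iSup_of_le y ?_
    rw [EReal.coe_sub]
    exact EReal.sub_le_sub (coe_le_moreauEnv_iff.2 hα) le_rfl
  · refine EReal.ge_of_forall_gt_iff_ge.1 fun β hβ => le_sSup ?_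
    have hβ' : ((β + γ / 2 * ‖x - y‖ ^ 2 : ℝ) : EReal) ≤ moreauEnv γ f y :=
      ((EReal.lt_sub_iff_add_lt (.inl (EReal.coe_ne_bot _)) (.inl (EReal.coe_ne_top _))).1 hβ).le
    exact ⟨_, y, coe_le_moreauEnv_iff.1 hβ', by simp⟩

end MoreauEnvelope

theorem stmt_0_general (γ : ℝ) (f : V → EReal) (x : V) :
    Qenv γ f x = Senv γ (Senv γ f) x ∧
    Qenv γ f x =
      ⨆ y : V, ((⨅ w : V, (f w + ((γ / 2 * ‖w - y‖ ^ 2 : ℝ) : EReal)))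
        - ((γ / 2 * ‖x - y‖ ^ 2 : ℝ) : EReal)) := by
  refine ⟨?_, qenv_eq_iSup_moreauEnv_sub γ f x⟩
  rw [qenv_eq_iSup_moreauEnv_sub]
  refine iSup_congr fun y => ?_
  rw [senv_eq_neg_moreauEnv, neg_neg, norm_sub_rev]

theorem stmt_0 (γ : ℝ) (hγ : 0 < γ) (f : V → EReal) (hf0 : ∀ x, 0 ≤ f x)
    (hlsc : LowerSemicontinuous f) (x : V) :
    Qenv γ f x = Senv γ (Senv γ f) x ∧
    Qenv γ f x =
      ⨆ y : V, ((⨅ w : V, (f w + ((γ / 2 * ‖w - y‖ ^ 2 : ℝ) : EReal)))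
        - ((γ / 2 * ‖x - y‖ ^ 2 : ℝ) : EReal)) :=
  stmt_0_general γ f x
end

section
/- For every γ > 0 and every lower semicontinuous function f : V → [0,∞], the quadratic envelope Q_γ(f) is lower semicontinuous, takes values in [0,∞], and is continuous at every point of the interior of its effective domain {x ∈ V : Q_γ(f)(x) < ∞}. -/
set_option maxHeartbeats 1000000
set_option linter.unusedSectionVars false

open Metric Set Filter Topology
open scoped RealInnerProductSpace


variable {V : Type*} [NormedAddCommGroup V] [InnerProductSpace ℝ V] [CompleteSpace V]
  [TopologicalSpace.SeparableSpace V]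

lemma qle {γ : ℝ} {f : V → EReal} {α : ℝ} {y : V}
    (h : ∀ z : V, ((α - γ / 2 * ‖z - y‖ ^ 2 : ℝ) : EReal) ≤ f z) (v : V) :
    ((α - γ / 2 * ‖v - y‖ ^ 2 : ℝ) : EReal) ≤ Qenv γ f v :=
  le_sSup ⟨α, y, h, rfl⟩

lemma qnonneg {γ : ℝ} (hγ : 0 < γ) {f : V → EReal} (hf0 : ∀ x, 0 ≤ f x) (x : V) :
    0 ≤ Qenv γ f x := by
  have h : ∀ z : V, (((0:ℝ) - γ / 2 * ‖z - x‖ ^ 2 : ℝ) : EReal) ≤ f z := fun z => by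
    refine le_trans ?_ (hf0 z)
    have h0 : (0:ℝ) ≤ γ / 2 * ‖z - x‖ ^ 2 := by positivity
    have h1 : ((0:ℝ) - γ / 2 * ‖z - x‖ ^ 2 : ℝ) ≤ 0 := by linarith
    exact_mod_cast h1
  have := qle h x
  simpa using this

lemma qlsc {γ : ℝ} {f : V → EReal} : LowerSemicontinuous (Qenv γ f) := by
  intro x c hc
  obtain ⟨v, ⟨α, y, hαy, rfl⟩, hv⟩ := lt_sSup_iff.1 hc
  have hcont : Continuous fun x' : V => ((α - γ / 2 * ‖x' - y‖ ^ 2 : ℝ) : EReal) :=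
    continuous_coe_real_ereal.comp (by fun_prop)
  have hmem := hcont.continuousAt (x := x) |>.preimage_mem_nhds (isOpen_Ioi.mem_nhds hv)
  filter_upwards [hmem] with x' hx'
  exact lt_of_lt_of_le hx' (qle hαy x')

lemma key_identity (γ α : ℝ) (y x w : V) {a b : ℝ} (hab : a + b = 1) :
    α - γ / 2 * ‖(a • x + b • w) - y‖ ^ 2 + γ / 2 * ‖a • x + b • w‖ ^ 2 =
      a * (α - γ / 2 * ‖x - y‖ ^ 2 + γ / 2 * ‖x‖ ^ 2)
        + b * (α - γ / 2 * ‖w - y‖ ^ 2 + γ / 2 * ‖w‖ ^ 2) := by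
  have h1 : (inner ℝ (a • x + b • w) y : ℝ) = a * (inner ℝ x y : ℝ) + b * (inner ℝ w y : ℝ) := by
    rw [inner_add_left, real_inner_smul_left, real_inner_smul_left]
  have h2 : ‖a • x + b • w‖ ^ 2 = ‖a • x + b • w‖ ^ 2 := rfl
  rw [norm_sub_sq_real, norm_sub_sq_real, norm_sub_sq_real, h1]
  linear_combination (-(α - γ/2 * ‖y‖^2)) * hab

lemma qne_bot {γ : ℝ} (hγ : 0 < γ) {f : V → EReal} (hf0 : ∀ x, 0 ≤ f x) (x : V) :
    Qenv γ f x ≠ ⊥ :=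
  ((lt_of_lt_of_le (by norm_num : (⊥ : EReal) < 0) (qnonneg hγ hf0 x))).ne'

lemma qbound {γ : ℝ} (hγ : 0 < γ) {f : V → EReal} (hf0 : ∀ x, 0 ≤ f x)
    {x w : V} (hx : Qenv γ f x < ⊤) (hw : Qenv γ f w < ⊤)
    {a b : ℝ} (ha : 0 ≤ a) (hb : 0 ≤ b) (hab : a + b = 1) :
    Qenv γ f (a • x + b • w) ≤
      ((a * ((Qenv γ f x).toReal + γ / 2 * ‖x‖ ^ 2)
        + b * ((Qenv γ f w).toReal + γ / 2 * ‖w‖ ^ 2)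
        - γ / 2 * ‖a • x + b • w‖ ^ 2 : ℝ) : EReal) := by
  apply sSup_le
  rintro v ⟨α, y, hαy, rfl⟩
  rw [EReal.coe_le_coe_iff]
  have tx : α - γ / 2 * ‖x - y‖ ^ 2 ≤ (Qenv γ f x).toReal :=
    EReal.coe_le_coe_iff.1 (by rw [EReal.coe_toReal hx.ne (qne_bot hγ hf0 x)]; exact qle hαy x)
  have tw : α - γ / 2 * ‖w - y‖ ^ 2 ≤ (Qenv γ f w).toReal :=
    EReal.coe_le_coe_iff.1 (by rw [EReal.coe_toReal hw.ne (qne_bot hγ hf0 w)]; exact qle hαy w)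
  have hid := key_identity γ α y x w hab
  have h1 : a * (α - γ / 2 * ‖x - y‖ ^ 2 + γ / 2 * ‖x‖ ^ 2)
      ≤ a * ((Qenv γ f x).toReal + γ / 2 * ‖x‖ ^ 2) :=
    mul_le_mul_of_nonneg_left (by linarith) ha
  have h2 : b * (α - γ / 2 * ‖w - y‖ ^ 2 + γ / 2 * ‖w‖ ^ 2)
      ≤ b * ((Qenv γ f w).toReal + γ / 2 * ‖w‖ ^ 2) :=
    mul_le_mul_of_nonneg_left (by linarith) hb
  linarith

theorem stmt_2 (γ : ℝ) (hγ : 0 < γ) (f : V → EReal) (hf0 : ∀ x, 0 ≤ f x)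
    (hlsc : LowerSemicontinuous f) :
    LowerSemicontinuous (Qenv γ f) ∧
    (∀ x : V, 0 ≤ Qenv γ f x) ∧
    (∀ x ∈ interior {x : V | Qenv γ f x < ⊤}, ContinuousAt (Qenv γ f) x) := by
  refine ⟨qlsc, qnonneg hγ hf0, ?_⟩
  intro x₀ hx₀
  set D : Set V := {x : V | Qenv γ f x < ⊤} with hD
  set C : Set V := interior D with hC
  -- D is convex
  have hDconv : Convex ℝ D := by
    intro x hx w hw a b ha hb hab
    exact lt_of_le_of_lt (qbound hγ hf0 hx hw ha hb hab) (EReal.coe_lt_top _)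
  -- the real-valued shifted function
  set F : V → ℝ := fun v => (Qenv γ f v).toReal + γ / 2 * ‖v‖ ^ 2 with hF
  have hFconv : ConvexOn ℝ C F := by
    refine ⟨hDconv.interior, ?_⟩
    intro x hx w hw a b ha hb hab
    have hx' : x ∈ D := interior_subset hx
    have hw' : w ∈ D := interior_subset hw
    have hcD : a • x + b • w ∈ D := hDconv hx' hw' ha hb hab
    have hb1 := qbound hγ hf0 hx' hw' ha hb hab
    have h2 : (Qenv γ f (a • x + b • w)).toReal ≤
        a * ((Qenv γ f x).toReal + γ / 2 * ‖x‖ ^ 2)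
        + b * ((Qenv γ f w).toReal + γ / 2 * ‖w‖ ^ 2)
        - γ / 2 * ‖a • x + b • w‖ ^ 2 := by
      have := EReal.toReal_le_toReal hb1 (qne_bot hγ hf0 _) (EReal.coe_ne_top _)
      rwa [EReal.toReal_coe] at this
    simp only [hF, smul_eq_mul]
    linarith
  -- radius with closed ball inside C
  obtain ⟨r, hr0, hball⟩ := Metric.mem_nhds_iff.1 (isOpen_interior.mem_nhds hx₀)
  have hballC : closedBall x₀ (r / 2) ⊆ C := fun p hp =>
    hball (lt_of_le_of_lt (mem_closedBall.1 hp) (by linarith))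
  set r' : ℝ := r / 2 with hr'
  have hr'0 : 0 < r' := by positivity
  -- Baire category on the closed ball
  have hcov : ∃ (n : ℕ) (w : V) (ρ : ℝ), 0 < ρ ∧ ball w ρ ⊆ closedBall x₀ r' ∧
      ∀ p ∈ ball w ρ, Qenv γ f p ≤ ((n : ℝ) : EReal) := by
    set K := closedBall x₀ r' with hK
    have : CompleteSpace K := isClosed_closedBall.completeSpace_coe
    set A : ℕ → Set K := fun n => {p : K | Qenv γ f p.1 ≤ ((n : ℝ) : EReal)} with hA
    have hAclosed : ∀ n, IsClosed (A n) := fun n => by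
      have := qlsc (γ := γ) (f := f)
      exact (this.isClosed_preimage ((n : ℝ) : EReal)).preimage continuous_subtype_val
    have hAcover : ⋃ n, A n = univ := by
      ext p
      simp only [mem_iUnion, mem_univ, iff_true, hA, mem_setOf_eq]
      have hpD' : (p : V) ∈ D := interior_subset (hballC p.2)
      have hpD : Qenv γ f p.1 < ⊤ := hpD'
      obtain ⟨n, hn⟩ := exists_nat_ge (Qenv γ f p.1).toReal
      exact ⟨n, by rw [← EReal.coe_toReal hpD.ne (qne_bot hγ hf0 p.1)]; exact_mod_cast hn⟩
    have : Nonempty K := ⟨⟨x₀, mem_closedBall_self hr'0.le⟩⟩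
    obtain ⟨n, ⟨z, hzint⟩⟩ := nonempty_interior_of_iUnion_of_closed hAclosed hAcover
    obtain ⟨t, hts, htopen, hzt⟩ := mem_interior.1 hzint
    obtain ⟨U, hUopen, hUt⟩ := isOpen_induced_iff.1 htopen
    have hzU : (z : V) ∈ U := by rw [← hUt] at hzt; exact hzt
    obtain ⟨δ, hδ0, hδU⟩ := Metric.isOpen_iff.1 hUopen z hzU
    -- choose the ball
    set s : ℝ := min 1 (δ / (2 * r')) with hs
    have hs0 : 0 < s := lt_min one_pos (by positivity)
    have hs1 : s ≤ 1 := min_le_left _ _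
    set w : V := x₀ + (1 - s) • ((z : V) - x₀) with hwdef
    set ρ : ℝ := min (δ / 4) (r' * s) with hρ
    have hρ0 : 0 < ρ := lt_min (by positivity) (by positivity)
    have hzx₀ : ‖(z : V) - x₀‖ ≤ r' := by
      have h := mem_closedBall.1 z.2
      rwa [dist_eq_norm] at h
    have hwx₀ : ‖w - x₀‖ ≤ (1 - s) * r' := by
      rw [hwdef, add_sub_cancel_left, norm_smul, Real.norm_eq_abs, abs_of_nonneg (by linarith)]
      exact mul_le_mul_of_nonneg_left hzx₀ (by linarith)
    have hwz : ‖(z : V) - w‖ ≤ δ / 2 := by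
      have hzw : (z : V) - w = s • ((z : V) - x₀) := by
        rw [hwdef]
        rw [show (z:V) - (x₀ + (1 - s) • ((z:V) - x₀)) = ((z:V) - x₀) - (1-s) • ((z:V) - x₀) by abel]
        rw [sub_smul, one_smul]
        abel
      rw [hzw, norm_smul, Real.norm_eq_abs, abs_of_nonneg hs0.le]
      calc s * ‖(z : V) - x₀‖ ≤ s * r' := mul_le_mul_of_nonneg_left hzx₀ hs0.le
        _ ≤ (δ / (2 * r')) * r' := mul_le_mul_of_nonneg_right (min_le_right _ _) hr'0.le
        _ = δ / 2 := by field_simp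
    refine ⟨n, w, ρ, hρ0, ?_, ?_⟩
    · intro p hp
      rw [mem_ball, dist_eq_norm] at hp
      rw [mem_closedBall, dist_eq_norm]
      calc ‖p - x₀‖ ≤ ‖p - w‖ + ‖w - x₀‖ := norm_sub_le_norm_sub_add_norm_sub p w x₀
        _ ≤ ρ + (1 - s) * r' := by
            have := hp.le
            linarith
        _ ≤ r' * s + (1 - s) * r' := by
            have : ρ ≤ r' * s := min_le_right _ _
            linarith
        _ = r' := by ring
    · intro p hp
      have hpK : p ∈ closedBall x₀ r' := by
        -- reuse previous computation
        rw [mem_ball, dist_eq_norm] at hp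
        rw [mem_closedBall, dist_eq_norm]
        calc ‖p - x₀‖ ≤ ‖p - w‖ + ‖w - x₀‖ := norm_sub_le_norm_sub_add_norm_sub p w x₀
          _ ≤ ρ + (1 - s) * r' := by linarith [hp.le]
          _ ≤ r' * s + (1 - s) * r' := by linarith [min_le_right (δ / 4) (r' * s)]
          _ = r' := by ring
      have hpz : dist p (z : V) < δ := by
        rw [mem_ball, dist_eq_norm] at hp
        rw [dist_eq_norm]
        calc ‖p - (z : V)‖ ≤ ‖p - w‖ + ‖w - (z : V)‖ := norm_sub_le_norm_sub_add_norm_sub _ _ _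
          _ < ρ + δ / 2 := by
              have h3 : ‖w - (z : V)‖ ≤ δ / 2 := by rw [norm_sub_rev]; exact hwz
              linarith
          _ ≤ δ / 4 + δ / 2 := by linarith [min_le_left (δ / 4) (r' * s)]
          _ < δ := by linarith
      have hmem : (⟨p, hpK⟩ : K) ∈ Subtype.val ⁻¹' U := hδU hpz
      rw [hUt] at hmem
      have hfin := hts hmem
      simp only [hA, mem_setOf_eq] at hfin
      exact hfin
  obtain ⟨n, w, ρ, hρ0, hballsub, hbound⟩ := hcov
  have hwC : w ∈ C := hballC (hballsub (mem_ball_self hρ0))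
  -- F is bounded above near w
  have hFbdd : ∀ p ∈ ball w ρ, F p ≤ (n : ℝ) + γ / 2 * (‖w‖ + ρ) ^ 2 := by
    intro p hp
    have h1 : (Qenv γ f p).toReal ≤ (n : ℝ) := by
      have := EReal.toReal_le_toReal (hbound p hp) (qne_bot hγ hf0 p) (EReal.coe_ne_top _)
      rwa [EReal.toReal_coe] at this
    have h2 : ‖p‖ ≤ ‖w‖ + ρ := by
      have : ‖p - w‖ < ρ := by rwa [mem_ball, dist_eq_norm] at hp
      have h4 : ‖p‖ ≤ ‖w‖ + ‖p - w‖ := by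
        calc ‖p‖ = ‖w + (p - w)‖ := by rw [add_sub_cancel]
          _ ≤ ‖w‖ + ‖p - w‖ := norm_add_le _ _
      linarith
    have h3 : γ / 2 * ‖p‖ ^ 2 ≤ γ / 2 * (‖w‖ + ρ) ^ 2 := by
      apply mul_le_mul_of_nonneg_left _ (by positivity)
      have : (0:ℝ) ≤ ‖p‖ := norm_nonneg _
      nlinarith
    simp only [hF]
    linarith
  have hbddU : ∃ w ∈ C, (𝓝 w).IsBoundedUnder (· ≤ ·) F := by
    refine ⟨w, hwC, (n : ℝ) + γ / 2 * (‖w‖ + ρ) ^ 2, ?_⟩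
    rw [Filter.eventually_map]
    filter_upwards [ball_mem_nhds w hρ0] with p hp
    exact hFbdd p hp
  have hFcont : ContinuousOn F C :=
    ((hFconv.continuousOn_tfae isOpen_interior ⟨x₀, hx₀⟩).out 3 1).mp hbddU
  have hFca : ContinuousAt F x₀ := hFcont.continuousAt (isOpen_interior.mem_nhds hx₀)
  -- transfer to Qenv
  have hGca : ContinuousAt (fun v => ((F v - γ / 2 * ‖v‖ ^ 2 : ℝ) : EReal)) x₀ :=
    continuous_coe_real_ereal.continuousAt.comp (hFca.sub (by fun_prop))
  apply hGca.congr
  filter_upwards [isOpen_interior.mem_nhds hx₀] with v hv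
  have hvD' : v ∈ D := interior_subset hv
  have hvD : Qenv γ f v < ⊤ := hvD'
  rw [← EReal.coe_toReal hvD.ne (qne_bot hγ hf0 v)]
  congr 1
  simp only [hF]
  ring
end

section
/- For every γ > 0, every function f : V → [0,∞], and every d ∈ V, the function x ↦ Q_γ(f)(x) + (γ/2)‖x−d‖² is the lower semicontinuous convex envelope of the function x ↦ f(x) + (γ/2)‖x−d‖²; moreover 0 ≤ Q_γ(f)(x) ≤ f(x) for all x ∈ V. -/
variable {V : Type*} [NormedAddCommGroup V] [InnerProductSpace ℝ V] [CompleteSpace V]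
  [TopologicalSpace.SeparableSpace V]

open RealInnerProductSpace

set_option linter.unusedSectionVars false
set_option maxHeartbeats 1000000

section Aux

lemma real_affine_id (γ : ℝ) (hγ : γ ≠ 0) (w d z : V) (c : ℝ) :
    (c + ⟪w, d⟫ + ‖w‖ ^ 2 / (2 * γ)) - γ / 2 * ‖z - (d + γ⁻¹ • w)‖ ^ 2
      = ⟪w, z⟫ + c - γ / 2 * ‖z - d‖ ^ 2 := by
  have h1 : z - (d + γ⁻¹ • w) = (z - d) - γ⁻¹ • w := by abel
  rw [h1, norm_sub_sq_real, real_inner_smul_right, inner_sub_left, norm_smul, real_inner_comm z w,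
    real_inner_comm d w]
  simp [mul_pow, sq_abs]
  field_simp
  ring

lemma quad_affine (γ α : ℝ) (x y d : V) :
    α - γ / 2 * ‖x - y‖ ^ 2 + γ / 2 * ‖x - d‖ ^ 2
      = α + γ * ⟪x, y - d⟫ + γ / 2 * (‖d‖ ^ 2 - ‖y‖ ^ 2) := by
  rw [norm_sub_sq_real, norm_sub_sq_real, inner_sub_right]
  ring

lemma quad_affine_comb (γ α : ℝ) (y d x1 x2 : V) (a b : ℝ) (hab : a + b = 1) :
    α - γ / 2 * ‖(a • x1 + b • x2) - y‖ ^ 2 + γ / 2 * ‖(a • x1 + b • x2) - d‖ ^ 2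
      = a * (α - γ / 2 * ‖x1 - y‖ ^ 2 + γ / 2 * ‖x1 - d‖ ^ 2)
        + b * (α - γ / 2 * ‖x2 - y‖ ^ 2 + γ / 2 * ‖x2 - d‖ ^ 2) := by
  rw [quad_affine, quad_affine, quad_affine, inner_add_left, real_inner_smul_left,
    real_inner_smul_left]
  have hb : b = 1 - a := by linarith
  subst hb
  ring

lemma epi_closed (h : V → EReal) (hl : LowerSemicontinuous h) :
    IsClosed {p : V × ℝ | h p.1 ≤ (p.2 : EReal)} := by
  rw [← isOpen_compl_iff, isOpen_iff_mem_nhds]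
  rintro ⟨z, t⟩ hp
  simp only [Set.mem_compl_iff, Set.mem_setOf_eq, not_le] at hp
  obtain ⟨t', ht1, ht2⟩ := EReal.exists_between_coe_real hp
  have h1 : {z' | (t' : EReal) < h z'} ∈ nhds z := hl z t' ht2
  have h2 : Set.Iio t' ∈ nhds t := Iio_mem_nhds (by exact_mod_cast ht1)
  refine Filter.mem_of_superset (prod_mem_nhds h1 h2) ?_
  rintro ⟨z', s⟩ ⟨hz', hs⟩
  simp only [Set.mem_compl_iff, Set.mem_setOf_eq, not_le]
  exact lt_trans (by exact_mod_cast hs) hz'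

lemma epi_convex (h : V → EReal) (hc : ERealConvex h) :
    Convex ℝ {p : V × ℝ | h p.1 ≤ (p.2 : EReal)} := by
  rintro ⟨z1, t1⟩ h1 ⟨z2, t2⟩ h2 a b ha hb hab
  simp only [Set.mem_setOf_eq] at h1 h2 ⊢
  calc h (a • z1 + b • z2) ≤ (a : EReal) * h z1 + (b : EReal) * h z2 := hc z1 z2 a b ha hb hab
    _ ≤ (a : EReal) * (t1 : EReal) + (b : EReal) * (t2 : EReal) := by
        gcongr
    _ = ((a * t1 + b * t2 : ℝ) : EReal) := by rw [EReal.coe_add, EReal.coe_mul, EReal.coe_mul]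
    _ = _ := rfl

/-- Separation of a point below the epigraph. -/
lemma sep_aux (h : V → EReal) (hl : LowerSemicontinuous h) (hc : ERealConvex h)
    (z₀ : V) (hz₀b : h z₀ ≠ ⊥) (hz₀ : h z₀ ≠ ⊤)
    (x : V) (r : ℝ) (hr : (r : EReal) < h x) :
    ∃ (w : V) (s u : ℝ), 0 ≤ s ∧ ⟪w, x⟫ + r * s < u ∧
      ∀ z : V, ∀ t : ℝ, h z ≤ (t : EReal) → u < ⟪w, z⟫ + t * s := by
  set E := {p : V × ℝ | h p.1 ≤ (p.2 : EReal)} with hE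
  have hnotmem : (x, r) ∉ E := by simp [hE, not_le, hr]
  obtain ⟨φ, u, hφx, hφE⟩ :=
    geometric_hahn_banach_point_closed (epi_convex h hc) (epi_closed h hl) hnotmem
  set s : ℝ := φ (0, 1) with hs
  set A : V →L[ℝ] ℝ := φ.comp (ContinuousLinearMap.inl ℝ V ℝ) with hA
  have hdecomp : ∀ z : V, ∀ t : ℝ, φ (z, t) = A z + t * s := by
    intro z t
    have hzt : (z, t) = (z, (0:ℝ)) + t • ((0:V), (1:ℝ)) := by simp [Prod.ext_iff]
    rw [hzt, map_add, map_smul]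
    simp [hA, hs, smul_eq_mul]
  set w : V := (InnerProductSpace.toDual ℝ V).symm A with hw
  have hwA : ∀ z : V, ⟪w, z⟫ = A z := fun z => InnerProductSpace.toDual_symm_apply
  have hmem : ∀ z : V, ∀ t : ℝ, h z ≤ (t : EReal) → u < ⟪w, z⟫ + t * s := by
    intro z t hzt
    have := hφE (z, t) hzt
    rwa [hdecomp, ← hwA] at this
  have hsnn : 0 ≤ s := by
    by_contra hneg
    push_neg at hneg
    set t₀ : ℝ := (h z₀).toReal with ht₀
    have hz₀le : h z₀ ≤ (t₀ : EReal) := EReal.le_coe_toReal hz₀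
    set t : ℝ := max t₀ ((u - ⟪w, z₀⟫) / s + 1) with ht
    have h1 : u < ⟪w, z₀⟫ + t * s :=
      hmem z₀ t (le_trans hz₀le (EReal.coe_le_coe_iff.2 (le_max_left _ _)))
    have h2 : (u - ⟪w, z₀⟫) / s + 1 ≤ t := le_max_right _ _
    have h3 : t * s ≤ ((u - ⟪w, z₀⟫) / s + 1) * s := mul_le_mul_of_nonpos_right h2 hneg.le
    have h4 : ((u - ⟪w, z₀⟫) / s + 1) * s = (u - ⟪w, z₀⟫) + s := by
      rw [add_mul, div_mul_cancel₀ _ hneg.ne, one_mul]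
    linarith
  refine ⟨w, s, u, hsnn, ?_, hmem⟩
  have := hφx
  rwa [hdecomp, ← hwA] at this

lemma minorant_of_pos (h : V → EReal) (hbot : ∀ z, h z ≠ ⊥) (w : V) (s u : ℝ) (hspos : 0 < s)
    (hm : ∀ z : V, ∀ t : ℝ, h z ≤ (t : EReal) → u < ⟪w, z⟫ + t * s) :
    ∀ z : V, ((⟪-(s⁻¹) • w, z⟫ + u / s : ℝ) : EReal) ≤ h z := by
  intro z
  by_cases hz : h z = ⊤
  · simp [hz]
  · have h1 := hm z (h z).toReal (EReal.le_coe_toReal hz)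
    have hlt : ⟪-(s⁻¹) • w, z⟫ + u / s ≤ (h z).toReal := by
      rw [real_inner_smul_left]
      have h2 : (-s⁻¹ * ⟪w, z⟫ + u / s) * s = u - ⟪w, z⟫ := by field_simp; ring
      have h3 : (-s⁻¹ * ⟪w, z⟫ + u / s) * s < (h z).toReal * s := by rw [h2]; linarith
      exact (lt_of_mul_lt_mul_right h3 hspos.le).le
    exact le_trans (EReal.coe_le_coe_iff.2 hlt) (EReal.coe_toReal_le (hbot z))

lemma exists_affine_minorant (h : V → EReal) (hl : LowerSemicontinuous h) (hc : ERealConvex h)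
    (hbot : ∀ z, h z ≠ ⊥) (z₀ : V) (hz₀ : h z₀ ≠ ⊤)
    (x : V) (r : ℝ) (hr : (r : EReal) < h x) :
    ∃ (w : V) (c : ℝ), (∀ z : V, ((⟪w, z⟫ + c : ℝ) : EReal) ≤ h z) ∧ r ≤ ⟪w, x⟫ + c := by
  have hz₀b := hbot z₀
  set r₀ : ℝ := (h z₀).toReal - 1 with hr₀def
  have hr₀ : (r₀ : EReal) < h z₀ := by
    conv_rhs => rw [← EReal.coe_toReal hz₀ hz₀b]
    exact EReal.coe_lt_coe_iff.2 (by simp [hr₀def])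
  obtain ⟨w₀, s₀, u₀, hs₀nn, hstrict₀, hm₀⟩ := sep_aux h hl hc z₀ hz₀b hz₀ z₀ r₀ hr₀
  have h1 : u₀ < ⟪w₀, z₀⟫ + (h z₀).toReal * s₀ := hm₀ z₀ _ (EReal.le_coe_toReal hz₀)
  have hs₀pos : 0 < s₀ := by nlinarith [hstrict₀]
  have hbase := minorant_of_pos h hbot w₀ s₀ u₀ hs₀pos hm₀
  set w₀' : V := -(s₀⁻¹) • w₀ with hw₀'
  set c₀ : ℝ := u₀ / s₀ with hc₀
  obtain ⟨w, s, u, hsnn, hstrict, hm⟩ := sep_aux h hl hc z₀ hz₀b hz₀ x r hr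
  rcases hsnn.lt_or_eq with hspos | hszero
  · refine ⟨-(s⁻¹) • w, u / s, minorant_of_pos h hbot w s u hspos hm, ?_⟩
    rw [real_inner_smul_left]
    have h2 : (-s⁻¹ * ⟪w, x⟫ + u / s) * s = u - ⟪w, x⟫ := by field_simp; ring
    have h3 : r * s < (-s⁻¹ * ⟪w, x⟫ + u / s) * s := by rw [h2]; linarith
    exact (lt_of_mul_lt_mul_right h3 hspos.le).le
  · have hu : ∀ z : V, h z ≠ ⊤ → u < ⟪w, z⟫ := by
      intro z hz
      have := hm z (h z).toReal (EReal.le_coe_toReal hz)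
      rwa [← hszero, mul_zero, add_zero] at this
    have hux : ⟪w, x⟫ < u := by
      have := hstrict; rwa [← hszero, mul_zero, add_zero] at this
    set D : ℝ := u - ⟪w, x⟫ with hD
    have hDpos : 0 < D := by simp only [hD]; linarith
    set n : ℝ := max 0 ((r - (⟪w₀', x⟫ + c₀)) / D) with hn
    have hn0 : 0 ≤ n := le_max_left _ _
    refine ⟨w₀' - n • w, c₀ + n * u, ?_, ?_⟩
    · intro z
      by_cases hz : h z = ⊤
      · simp [hz]
      · have huz : u < ⟪w, z⟫ := hu z hz
        have hle : ⟪w₀' - n • w, z⟫ + (c₀ + n * u) ≤ ⟪w₀', z⟫ + c₀ := by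
          rw [inner_sub_left, real_inner_smul_left w z n]
          nlinarith [mul_le_mul_of_nonneg_left huz.le hn0]
        exact le_trans (EReal.coe_le_coe_iff.2 hle) (hbase z)
    · have h2 : (r - (⟪w₀', x⟫ + c₀)) / D ≤ n := le_max_right _ _
      have h3 : r - (⟪w₀', x⟫ + c₀) ≤ n * D := by
        rw [div_le_iff₀ hDpos] at h2; linarith
      have h4 : n * D = n * u - n * ⟪w, x⟫ := by rw [hD]; ring
      rw [inner_sub_left, real_inner_smul_left w x n]
      linarith

lemma iSup_add_coe {ι : Type*} [Nonempty ι] (g : ι → EReal) (c : ℝ) :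
    (⨆ i, g i) + (c : EReal) = ⨆ i, (g i + (c : EReal)) := by
  apply le_antisymm
  · have h1 : (⨆ i, g i) ≤ (⨆ i, (g i + (c : EReal))) - (c : EReal) := by
      apply iSup_le
      intro i
      have h0 : g i + (c : EReal) ≤ ⨆ i, (g i + (c : EReal)) :=
        le_iSup (fun i => g i + (c : EReal)) i
      calc g i = g i + (c : EReal) - (c : EReal) := (EReal.add_sub_cancel_right).symm
        _ ≤ (⨆ i, (g i + (c : EReal))) - (c : EReal) := by apply add_le_add_left h0
    calc (⨆ i, g i) + (c : EReal)
        ≤ ((⨆ i, (g i + (c : EReal))) - (c : EReal)) + (c : EReal) := add_le_add_left h1 _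
      _ = ⨆ i, (g i + (c : EReal)) := EReal.sub_add_cancel
  · exact iSup_le fun i => add_le_add_left (le_iSup g i) _

lemma Qenv_eq_iSup (γ : ℝ) (f : V → EReal) (x : V) :
    Qenv γ f x = ⨆ p : {p : ℝ × V //
        ∀ z : V, ((p.1 - γ / 2 * ‖z - p.2‖ ^ 2 : ℝ) : EReal) ≤ f z},
      ((p.1.1 - γ / 2 * ‖x - p.1.2‖ ^ 2 : ℝ) : EReal) := by
  rw [Qenv, ← sSup_range]
  congr 1
  ext v
  constructor
  · rintro ⟨α, y, hP, rfl⟩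
    exact ⟨⟨(α, y), hP⟩, rfl⟩
  · rintro ⟨⟨⟨α, y⟩, hP⟩, rfl⟩
    exact ⟨α, y, hP, rfl⟩

end Aux

theorem stmt_4 (γ : ℝ) (hγ : 0 < γ) (f : V → EReal) (hf0 : ∀ x, 0 ≤ f x) (d : V) :
    LowerSemicontinuous (fun x : V => Qenv γ f x + ((γ / 2 * ‖x - d‖ ^ 2 : ℝ) : EReal)) ∧
    ERealConvex (fun x : V => Qenv γ f x + ((γ / 2 * ‖x - d‖ ^ 2 : ℝ) : EReal)) ∧
    (∀ x : V, Qenv γ f x + ((γ / 2 * ‖x - d‖ ^ 2 : ℝ) : EReal)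
        ≤ f x + ((γ / 2 * ‖x - d‖ ^ 2 : ℝ) : EReal)) ∧
    (∀ h : V → EReal, LowerSemicontinuous h → ERealConvex h →
      (∀ x : V, h x ≤ f x + ((γ / 2 * ‖x - d‖ ^ 2 : ℝ) : EReal)) →
      ∀ x : V, h x ≤ Qenv γ f x + ((γ / 2 * ‖x - d‖ ^ 2 : ℝ) : EReal)) ∧
    (∀ x : V, 0 ≤ Qenv γ f x ∧ Qenv γ f x ≤ f x) := by
  classical
  have hSne : Nonempty {p : ℝ × V //
      ∀ z : V, ((p.1 - γ / 2 * ‖z - p.2‖ ^ 2 : ℝ) : EReal) ≤ f z} :=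
    ⟨⟨((0:ℝ), (0:V)), fun z =>
      le_trans (EReal.coe_nonpos.2 (by nlinarith [sq_nonneg ‖z - (0:V)‖])) (hf0 z)⟩⟩
  have hrep : ∀ x : V, Qenv γ f x + ((γ / 2 * ‖x - d‖ ^ 2 : ℝ) : EReal)
      = ⨆ p : {p : ℝ × V // ∀ z : V, ((p.1 - γ / 2 * ‖z - p.2‖ ^ 2 : ℝ) : EReal) ≤ f z},
        ((p.1.1 - γ / 2 * ‖x - p.1.2‖ ^ 2 + γ / 2 * ‖x - d‖ ^ 2 : ℝ) : EReal) := by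
    intro x
    rw [Qenv_eq_iSup, iSup_add_coe]
    simp only [EReal.coe_add]
  have hQle : ∀ x, Qenv γ f x ≤ f x := by
    intro x
    apply sSup_le
    rintro v ⟨α, y, hP, rfl⟩
    exact hP x
  have hQnn : ∀ x, 0 ≤ Qenv γ f x := by
    intro x
    have hmem : (0 : EReal) ∈ {v : EReal | ∃ α : ℝ, ∃ y : V,
        (∀ z : V, ((α - γ / 2 * ‖z - y‖ ^ 2 : ℝ) : EReal) ≤ f z) ∧
        v = ((α - γ / 2 * ‖x - y‖ ^ 2 : ℝ) : EReal)} := by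
      refine ⟨0, x, fun z =>
        le_trans (EReal.coe_nonpos.2 (by nlinarith [sq_nonneg ‖z - x‖])) (hf0 z), by simp⟩
    exact le_sSup hmem
  refine ⟨?_, ?_, fun x => add_le_add_left (hQle x) _, ?_, fun x => ⟨hQnn x, hQle x⟩⟩
  · -- lower semicontinuity
    have heq : (fun x : V => Qenv γ f x + ((γ / 2 * ‖x - d‖ ^ 2 : ℝ) : EReal))
        = fun x : V => ⨆ p : {p : ℝ × V //
            ∀ z : V, ((p.1 - γ / 2 * ‖z - p.2‖ ^ 2 : ℝ) : EReal) ≤ f z},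
          ((p.1.1 - γ / 2 * ‖x - p.1.2‖ ^ 2 + γ / 2 * ‖x - d‖ ^ 2 : ℝ) : EReal) := funext hrep
    rw [heq]
    apply lowerSemicontinuous_iSup
    intro p
    apply Continuous.lowerSemicontinuous
    apply continuous_coe_real_ereal.comp
    fun_prop
  · -- convexity
    intro x y a b ha hb hab
    simp only
    rw [hrep (a • x + b • y), hrep x, hrep y]
    apply iSup_le
    intro p
    calc ((p.1.1 - γ / 2 * ‖(a • x + b • y) - p.1.2‖ ^ 2
            + γ / 2 * ‖(a • x + b • y) - d‖ ^ 2 : ℝ) : EReal)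
        = ((a * (p.1.1 - γ / 2 * ‖x - p.1.2‖ ^ 2 + γ / 2 * ‖x - d‖ ^ 2)
            + b * (p.1.1 - γ / 2 * ‖y - p.1.2‖ ^ 2 + γ / 2 * ‖y - d‖ ^ 2) : ℝ) : EReal) := by
          rw [quad_affine_comb γ p.1.1 p.1.2 d x y a b hab]
      _ = (a : EReal) * ((p.1.1 - γ / 2 * ‖x - p.1.2‖ ^ 2 + γ / 2 * ‖x - d‖ ^ 2 : ℝ) : EReal)
            + (b : EReal) * ((p.1.1 - γ / 2 * ‖y - p.1.2‖ ^ 2 + γ / 2 * ‖y - d‖ ^ 2 : ℝ) : EReal) := by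
          rw [EReal.coe_add, EReal.coe_mul, EReal.coe_mul]
      _ ≤ _ := by
          apply add_le_add
          · exact mul_le_mul_of_nonneg_left
              (le_iSup (fun p : {p : ℝ × V //
                ∀ z : V, ((p.1 - γ / 2 * ‖z - p.2‖ ^ 2 : ℝ) : EReal) ≤ f z} =>
                ((p.1.1 - γ / 2 * ‖x - p.1.2‖ ^ 2 + γ / 2 * ‖x - d‖ ^ 2 : ℝ) : EReal)) p)
              (EReal.coe_nonneg.2 ha)
          · exact mul_le_mul_of_nonneg_left
              (le_iSup (fun p : {p : ℝ × V //
                ∀ z : V, ((p.1 - γ / 2 * ‖z - p.2‖ ^ 2 : ℝ) : EReal) ≤ f z} =>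
                ((p.1.1 - γ / 2 * ‖y - p.1.2‖ ^ 2 + γ / 2 * ‖y - d‖ ^ 2 : ℝ) : EReal)) p)
              (EReal.coe_nonneg.2 hb)
  · -- greatest minorant property
    intro h hl hc hg x
    by_contra hcon
    push_neg at hcon
    obtain ⟨r, hr1, hr2⟩ := EReal.exists_between_coe_real hcon
    refine absurd hr1 (not_lt.2 ?_)
    by_cases hbot : ∀ z, h z ≠ ⊥
    · by_cases hprop : ∃ z₀, h z₀ ≠ ⊤
      · obtain ⟨z₀, hz₀⟩ := hprop
        obtain ⟨w, c, hmin, hval⟩ := exists_affine_minorant h hl hc hbot z₀ hz₀ x r hr2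
        set y : V := d + γ⁻¹ • w with hy
        set α : ℝ := c + ⟪w, d⟫ + ‖w‖ ^ 2 / (2 * γ) with hα
        have hadm : ∀ z : V, ((α - γ / 2 * ‖z - y‖ ^ 2 : ℝ) : EReal) ≤ f z := by
          intro z
          rw [hα, hy, real_affine_id γ hγ.ne' w d z c]
          have hsum : ((⟪w, z⟫ + c - γ / 2 * ‖z - d‖ ^ 2 : ℝ) : EReal)
                + ((γ / 2 * ‖z - d‖ ^ 2 : ℝ) : EReal)
              ≤ f z + ((γ / 2 * ‖z - d‖ ^ 2 : ℝ) : EReal) := by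
            rw [← EReal.coe_add]
            have heq2 : (⟪w, z⟫ + c - γ / 2 * ‖z - d‖ ^ 2) + γ / 2 * ‖z - d‖ ^ 2
                = ⟪w, z⟫ + c := by ring
            rw [heq2]
            exact le_trans (hmin z) (hg z)
          exact (EReal.addLECancellable_coe _).add_le_add_iff_right.1 hsum
        have hQ : ((α - γ / 2 * ‖x - y‖ ^ 2 : ℝ) : EReal) ≤ Qenv γ f x :=
          le_sSup ⟨α, y, hadm, rfl⟩
        calc (r : EReal) ≤ ((⟪w, x⟫ + c : ℝ) : EReal) := EReal.coe_le_coe_iff.2 hval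
          _ = ((α - γ / 2 * ‖x - y‖ ^ 2 : ℝ) : EReal) + ((γ / 2 * ‖x - d‖ ^ 2 : ℝ) : EReal) := by
              rw [← EReal.coe_add, hα, hy, real_affine_id γ hγ.ne' w d x c]
              norm_cast
              ring
          _ ≤ _ := add_le_add_left hQ _
      · push_neg at hprop
        have hftop : ∀ z, f z = ⊤ := by
          intro z
          by_contra hfz
          have h1 : f z + ((γ / 2 * ‖z - d‖ ^ 2 : ℝ) : EReal) < ⊤ :=
            EReal.add_lt_top hfz (EReal.coe_ne_top _)
          have h2 := lt_of_le_of_lt (hg z) h1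
          rw [hprop z] at h2
          exact lt_irrefl _ h2
        have hQtop : Qenv γ f x = ⊤ := by
          by_contra hQ
          obtain ⟨m, hm1, hm2⟩ := EReal.exists_between_coe_real (Ne.lt_top hQ)
          have hmem : ((m : ℝ) : EReal) ∈ {v : EReal | ∃ α : ℝ, ∃ y : V,
              (∀ z : V, ((α - γ / 2 * ‖z - y‖ ^ 2 : ℝ) : EReal) ≤ f z) ∧
              v = ((α - γ / 2 * ‖x - y‖ ^ 2 : ℝ) : EReal)} :=
            ⟨m, x, fun z => by rw [hftop z]; exact le_top, by simp⟩
          exact absurd (le_sSup hmem) (not_le.2 hm1)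
        rw [hQtop, EReal.top_add_coe]
        exact le_top
    · push_neg at hbot
      obtain ⟨z, hz⟩ := hbot
      exfalso
      have hev := hl x r hr2
      have hcont : Continuous fun t : ℝ => (1 - t) • x + t • z := by continuity
      have htend : Filter.Tendsto (fun t : ℝ => (1 - t) • x + t • z)
          (nhdsWithin 0 (Set.Ioi 0)) (nhds x) := by
        have h0 := hcont.tendsto 0
        simp only [sub_zero, one_smul, zero_smul, add_zero] at h0
        exact h0.mono_left nhdsWithin_le_nhds
      have hev2 := htend.eventually hev
      have hev3 : Set.Ioo (0 : ℝ) 1 ∈ nhdsWithin 0 (Set.Ioi 0) :=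
        Ioo_mem_nhdsGT_of_mem (by constructor <;> norm_num)
      obtain ⟨t, ht1, ht2⟩ := (hev2.and hev3).exists
      have hcomb := hc x z (1 - t) t (by linarith [ht2.2]) ht2.1.le (by ring)
      rw [hz] at hcomb
      rw [EReal.coe_mul_bot_of_pos ht2.1, EReal.add_bot] at hcomb
      exact absurd (lt_of_lt_of_le ht1 hcomb) (by simp)
end

section
/- Let f : V → [0,∞] be lower semicontinuous and define g(x) = lim_{γ→0⁺} Q_γ(f)(x) (the limit exists by monotonicity of γ ↦ Q_γ(f)(x), as the infimum over γ > 0). Then g is convex, g(x) ≤ f(x) for all x, and g lies above the lower semicontinuous convex envelope of f, i.e. f**(x) ≤ g(x) for all x ∈ V. -/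
open Topology

variable {V : Type*} [NormedAddCommGroup V] [InnerProductSpace ℝ V] [CompleteSpace V]
  [TopologicalSpace.SeparableSpace V]

section helpers

lemma combo_norm_id (a b : ℝ) (hab : a + b = 1) (x y w : V) :
    ‖a • x + b • y - w‖ ^ 2 = a * ‖x - w‖ ^ 2 + b * ‖y - w‖ ^ 2 - a * b * ‖x - y‖ ^ 2 := by
  have hb : b = 1 - a := by linarith
  subst hb
  have h1 : ∀ v : V, ‖v‖ ^ 2 = (inner ℝ v v : ℝ) := fun v => (real_inner_self_eq_norm_sq v).symm
  have hw : a • x + (1-a) • y - w = a • (x - w) + (1-a) • (y - w) := by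
    rw [smul_sub, smul_sub]; module
  have hxy : x - y = (x - w) - (y - w) := by abel
  rw [hw, hxy, h1, h1, h1, h1]
  simp only [inner_add_left, inner_add_right, inner_sub_left, inner_sub_right,
    real_inner_smul_left, real_inner_smul_right]
  rw [real_inner_comm w x, real_inner_comm w y, real_inner_comm y x]
  ring

lemma mono_norm_id (γ γ' : ℝ) (hγ' : γ' ≠ 0) (α : ℝ) (x y z : V) :
    ((α - γ/2*‖x-y‖^2) + γ^2*‖y-x‖^2/(2*γ')) - γ'/2*‖z-(x + (γ/γ')•(y-x))‖^2
      = α - γ/2*‖z-y‖^2 - (γ'-γ)/2*‖z-x‖^2 := by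
  have h1 : ∀ v : V, ‖v‖ ^ 2 = (inner ℝ v v : ℝ) := fun v => (real_inner_self_eq_norm_sq v).symm
  have e1 : z - (x + (γ/γ')•(y-x)) = (z - x) - (γ/γ') • (y - x) := by abel
  have e2 : z - y = (z - x) - (y - x) := by abel
  have e3 : x - y = -(y - x) := by abel
  rw [e1, e2, e3, h1, h1, h1, h1, h1]
  simp only [inner_add_left, inner_add_right, inner_sub_left, inner_sub_right,
    inner_neg_neg, real_inner_smul_left, real_inner_smul_right]
  rw [real_inner_comm y x, real_inner_comm z x, real_inner_comm z y]
  field_simp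
  ring

lemma affine_norm_id (γ : ℝ) (hγ : γ ≠ 0) (β : ℝ) (c x z : V) :
    ((β + inner ℝ c x + ‖c‖^2/(2*γ)) - γ/2*‖z-(x + γ⁻¹•c)‖^2 : ℝ)
      = ((inner ℝ c z : ℝ) + β) - γ/2*‖z-x‖^2 := by
  have h1 : ∀ v : V, ‖v‖ ^ 2 = (inner ℝ v v : ℝ) := fun v => (real_inner_self_eq_norm_sq v).symm
  have e1 : z - (x + γ⁻¹•c) = (z - x) - γ⁻¹ • c := by abel
  have e2 : z = x + (z - x) := by abel
  rw [e1, h1, h1, h1]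
  nth_rewrite 2 [e2]
  simp only [inner_add_left, inner_add_right, inner_sub_left, inner_sub_right,
    real_inner_smul_left, real_inner_smul_right]
  rw [real_inner_comm z c, real_inner_comm x c, real_inner_comm z x]
  field_simp
  ring

lemma ereal_le_of_forall_real_lt {a b : EReal} (h : ∀ r : ℝ, (r : EReal) < a → (r : EReal) ≤ b) :
    a ≤ b := by
  by_contra hab
  push_neg at hab
  obtain ⟨r, hbr, hra⟩ := EReal.exists_between_coe_real hab
  exact absurd (h r hra) (not_le.2 hbr)

lemma Qenv_nonneg {γ : ℝ} (hγ : 0 ≤ γ) {f : V → EReal} (hf0 : ∀ x, 0 ≤ f x) (x : V) :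
    (0 : EReal) ≤ Qenv γ f x := by
  have hmem : (0 : EReal) ∈ {v : EReal | ∃ α : ℝ, ∃ y : V,
      (∀ z : V, ((α - γ / 2 * ‖z - y‖ ^ 2 : ℝ) : EReal) ≤ f z) ∧
        v = ((α - γ / 2 * ‖x - y‖ ^ 2 : ℝ) : EReal)} := by
    refine ⟨0, x, fun z => ?_, by norm_num⟩
    refine le_trans ?_ (hf0 z)
    have h2 : (0:ℝ) ≤ γ / 2 * ‖z - x‖ ^ 2 := by positivity
    have : (0 - γ / 2 * ‖z - x‖ ^ 2 : ℝ) ≤ 0 := by linarith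
    exact_mod_cast this
  exact le_sSup hmem

lemma le_Qenv {γ : ℝ} {f : V → EReal} {α : ℝ} {y : V}
    (hq : ∀ z : V, ((α - γ / 2 * ‖z - y‖ ^ 2 : ℝ) : EReal) ≤ f z) (x : V) :
    ((α - γ / 2 * ‖x - y‖ ^ 2 : ℝ) : EReal) ≤ Qenv γ f x :=
  le_sSup ⟨α, y, hq, rfl⟩

lemma Qenv_le_f {γ : ℝ} {f : V → EReal} (x : V) : Qenv γ f x ≤ f x := by
  refine sSup_le ?_
  rintro v ⟨α, y, hq, rfl⟩
  exact hq x

lemma Qenv_mono {γ γ' : ℝ} (hγ : 0 ≤ γ) (hle : γ ≤ γ') (hγ' : 0 < γ') {f : V → EReal} (x : V) :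
    Qenv γ f x ≤ Qenv γ' f x := by
  refine sSup_le ?_
  rintro v ⟨α, y, hq, rfl⟩
  refine le_sSup ⟨(α - γ/2*‖x-y‖^2) + γ^2*‖y-x‖^2/(2*γ'), x + (γ/γ')•(y-x), fun z => ?_, ?_⟩
  · rw [show ((α - γ/2*‖x-y‖^2) + γ^2*‖y-x‖^2/(2*γ')) - γ'/2*‖z-(x + (γ/γ')•(y-x))‖^2
        = α - γ/2*‖z-y‖^2 - (γ'-γ)/2*‖z-x‖^2 from mono_norm_id γ γ' hγ'.ne' α x y z]
    refine le_trans ?_ (hq z)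
    have : α - γ/2*‖z-y‖^2 - (γ'-γ)/2*‖z-x‖^2 ≤ α - γ/2*‖z-y‖^2 := by nlinarith [sq_nonneg ‖z-x‖]
    exact_mod_cast this
  · congr 1
    have := mono_norm_id γ γ' hγ'.ne' α x y x
    simp only [sub_self, norm_zero] at this ⊢
    rw [this]; ring

lemma Qenv_affine {γ : ℝ} (hγ : 0 < γ) {f : V → EReal} (c : V) (β : ℝ)
    (hmin : ∀ z : V, (((inner ℝ c z : ℝ) + β : ℝ) : EReal) ≤ f z) (x : V) :
    (((inner ℝ c x : ℝ) + β : ℝ) : EReal) ≤ Qenv γ f x := by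
  refine le_sSup ⟨β + inner ℝ c x + ‖c‖^2/(2*γ), x + γ⁻¹•c, fun z => ?_, ?_⟩
  · rw [show ((β + (inner ℝ c x : ℝ) + ‖c‖^2/(2*γ)) - γ/2*‖z-(x + γ⁻¹•c)‖^2 : ℝ)
        = ((inner ℝ c z : ℝ) + β) - γ/2*‖z-x‖^2 from affine_norm_id γ hγ.ne' β c x z]
    refine le_trans ?_ (hmin z)
    have : ((inner ℝ c z : ℝ) + β) - γ/2*‖z-x‖^2 ≤ (inner ℝ c z : ℝ) + β := by
      nlinarith [sq_nonneg ‖z-x‖]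
    exact_mod_cast this
  · congr 1
    have := affine_norm_id γ hγ.ne' β c x x
    simp only [sub_self, norm_zero] at this ⊢
    rw [this]; ring

lemma Qenv_combo {γ : ℝ} (hγ : 0 ≤ γ) {f : V → EReal} {x y : V} {a b p q : ℝ}
    (ha : 0 ≤ a) (hb : 0 ≤ b) (hab : a + b = 1)
    (hx : Qenv γ f x ≤ ((p : ℝ) : EReal)) (hy : Qenv γ f y ≤ ((q : ℝ) : EReal)) :
    Qenv γ f (a • x + b • y) ≤ ((a*p + b*q + γ/2*(a*b*‖x-y‖^2) : ℝ) : EReal) := by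
  refine sSup_le ?_
  rintro v ⟨α, y₀, hq, rfl⟩
  have hxr : α - γ/2*‖x-y₀‖^2 ≤ p := by
    have := le_trans (le_Qenv hq x) hx
    exact_mod_cast this
  have hyr : α - γ/2*‖y-y₀‖^2 ≤ q := by
    have := le_trans (le_Qenv hq y) hy
    exact_mod_cast this
  have hid := combo_norm_id a b hab x y y₀
  have : α - γ/2*‖a • x + b • y - y₀‖^2 ≤ a*p + b*q + γ/2*(a*b*‖x-y‖^2) := by
    rw [hid]
    have hα : a*α + b*α = α := by rw [← add_mul, hab, one_mul]
    nlinarith [mul_le_mul_of_nonneg_left hxr ha, mul_le_mul_of_nonneg_left hyr hb, hα]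
  exact_mod_cast this

end helpers

lemma exists_affine_minorant_s7 {h : V → EReal} (hl : LowerSemicontinuous h)
    (hconv : ERealConvex h) (hpos : ∀ z, 0 ≤ h z) {x : V} {b : ℝ} (hb : (b : EReal) < h x) :
    ∃ c : V, ∃ β : ℝ, (∀ z, (((inner ℝ c z : ℝ) + β : ℝ) : EReal) ≤ h z) ∧
      b < (inner ℝ c x : ℝ) + β := by
  have hnb : ∀ z, h z ≠ ⊥ := by
    intro z hz
    have := hpos z
    rw [hz] at this
    simp at this
  by_cases hbneg : b < 0
  · refine ⟨0, 0, fun z => ?_, ?_⟩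
    · simpa using hpos z
    · simpa using hbneg
  push_neg at hbneg
  by_cases htop : ∀ z, h z = ⊤
  · refine ⟨0, b + 1, fun z => by simp [htop z], by simp⟩
  push_neg at htop
  obtain ⟨z₀, hz₀⟩ := htop
  set E : Set (V × ℝ) := {p | h p.1 ≤ (p.2 : EReal)} with hE
  have hEclosed : IsClosed E := by
    rw [← isOpen_compl_iff, isOpen_iff_mem_nhds]
    intro p hp
    have hp' : (p.2 : EReal) < h p.1 := lt_of_not_ge hp
    obtain ⟨t', h1, h2⟩ := EReal.exists_between_coe_real hp'
    have hev : {z | (t' : EReal) < h z} ∈ 𝓝 p.1 := hl p.1 (t' : EReal) h2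
    have hmem : {z | (t' : EReal) < h z} ×ˢ (Set.Iio t') ∈ 𝓝 p :=
      prod_mem_nhds hev (Iio_mem_nhds (by exact_mod_cast h1))
    refine Filter.mem_of_superset hmem ?_
    rintro ⟨z, t⟩ ⟨hz, ht⟩
    have : (t : EReal) < h z := lt_trans (by exact_mod_cast ht) hz
    exact not_le.2 this
  have hEconv : Convex ℝ E := by
    rintro p hp q hq a a' ha ha' haa
    have hcomb := hconv p.1 q.1 a a' ha ha' haa
    have h1 : (a : EReal) * h p.1 ≤ (a : EReal) * (p.2 : EReal) :=
      mul_le_mul_of_nonneg_left hp (by exact_mod_cast ha)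
    have h2 : (a' : EReal) * h q.1 ≤ (a' : EReal) * (q.2 : EReal) :=
      mul_le_mul_of_nonneg_left hq (by exact_mod_cast ha')
    show h (a • p + a' • q).1 ≤ (((a • p + a' • q).2 : ℝ) : EReal)
    have hfst : (a • p + a' • q).1 = a • p.1 + a' • q.1 := rfl
    have hsnd : (a • p + a' • q).2 = a * p.2 + a' * q.2 := rfl
    rw [hfst, hsnd]
    calc h (a • p.1 + a' • q.1) ≤ (a : EReal) * h p.1 + (a' : EReal) * h q.1 := hcomb
      _ ≤ (a : EReal) * (p.2 : EReal) + (a' : EReal) * (q.2 : EReal) := add_le_add h1 h2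
      _ = ((a * p.2 + a' * q.2 : ℝ) : EReal) := by push_cast; ring
  have hxnotin : (x, b) ∉ E := not_le.2 hb
  obtain ⟨ψ, u, hψE, hψx⟩ := geometric_hahn_banach_closed_point hEconv hEclosed hxnotin
  set φ : V →L[ℝ] ℝ := ψ.comp (ContinuousLinearMap.inl ℝ V ℝ) with hφ
  set s : ℝ := ψ (0, 1) with hsdef
  have hdecomp : ∀ (z : V) (t : ℝ), ψ (z, t) = φ z + t * s := by
    intro z t
    have : (z, t) = (z, 0) + t • ((0 : V), (1 : ℝ)) := by
      simp [Prod.ext_iff]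
    rw [this, map_add, map_smul]
    simp [hφ, smul_eq_mul, hsdef]
  have hr₀ : (((h z₀).toReal : ℝ) : EReal) = h z₀ := EReal.coe_toReal hz₀ (hnb z₀)
  set r₀ : ℝ := (h z₀).toReal with hr₀def
  have hz₀E : ∀ t : ℝ, r₀ ≤ t → (z₀, t) ∈ E := by
    intro t ht
    show h z₀ ≤ (t : EReal)
    rw [← hr₀]
    exact_mod_cast ht
  have hs : s ≤ 0 := by
    by_contra hs
    push_neg at hs
    set t : ℝ := max r₀ ((u - φ z₀) / s) with htdef
    have h1 : (z₀, t) ∈ E := hz₀E t (le_max_left _ _)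
    have h2 := hψE _ h1
    rw [hdecomp] at h2
    have h3 : (u - φ z₀) / s ≤ t := le_max_right _ _
    have h4 : u - φ z₀ ≤ t * s := by
      rw [div_le_iff₀ hs] at h3
      linarith
    linarith
  -- the equation from hψx
  have hψx' : u < φ x + b * s := by rw [← hdecomp]; exact hψx
  rcases lt_or_eq_of_le hs with hslt | hseq
  · -- s < 0
    set c₀ : V := (InnerProductSpace.toDual ℝ V).symm φ with hc₀
    have hc₀inner : ∀ z, (inner ℝ c₀ z : ℝ) = φ z := fun z =>
      InnerProductSpace.toDual_symm_apply
    refine ⟨(-(1/s)) • c₀, u / s, fun z => ?_, ?_⟩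
    · by_cases hz : h z = ⊤
      · rw [hz]; exact le_top
      · have hrz : (((h z).toReal : ℝ) : EReal) = h z := EReal.coe_toReal hz (hnb z)
        set r : ℝ := (h z).toReal with hrdef
        have hzE : (z, r) ∈ E := by show h z ≤ (r : EReal); rw [← hrz]
        have h5 := hψE _ hzE
        rw [hdecomp] at h5
        have h6 : (inner ℝ ((-(1/s)) • c₀) z : ℝ) + u / s ≤ r := by
          rw [real_inner_smul_left, hc₀inner]
          rw [show (-(1/s)) * φ z + u / s = (u - φ z) / s by ring]
          rw [div_le_iff_of_neg hslt]
          nlinarith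
        rw [← hrz]
        exact_mod_cast h6
    · rw [real_inner_smul_left, hc₀inner]
      rw [show (-(1/s)) * φ x + u / s = (u - φ x) / s by ring]
      rw [lt_div_iff_of_neg hslt]
      nlinarith
  · -- s = 0
    have hs0 : s = 0 := hseq
    have hφE : ∀ z : V, h z ≠ ⊤ → φ z < u := by
      intro z hz
      have hrz : (((h z).toReal : ℝ) : EReal) = h z := EReal.coe_toReal hz (hnb z)
      have hzE : (z, (h z).toReal) ∈ E := by
        show h z ≤ (((h z).toReal : ℝ) : EReal); rw [hrz]
      have := hψE _ hzE
      rw [hdecomp, hs0] at this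
      linarith
    have hφx : u < φ x := by rw [hs0] at hψx'; linarith
    have hxu : (0:ℝ) < φ x - u := by linarith
    obtain ⟨t, htdef⟩ : ∃ t : ℝ, t = (|b| + 1) / (φ x - u) := ⟨_, rfl⟩
    have ht : 0 < t := by
      rw [htdef]
      apply div_pos
      · have := abs_nonneg b; linarith
      · linarith
    set c₀ : V := (InnerProductSpace.toDual ℝ V).symm φ with hc₀
    have hc₀inner : ∀ z, (inner ℝ c₀ z : ℝ) = φ z := fun z =>
      InnerProductSpace.toDual_symm_apply
    refine ⟨t • c₀, -(t * u), fun z => ?_, ?_⟩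
    · by_cases hz : h z = ⊤
      · rw [hz]; exact le_top
      · have h7 : φ z < u := hφE z hz
        have h8 : (inner ℝ (t • c₀) z : ℝ) + -(t * u) ≤ 0 := by
          rw [real_inner_smul_left, hc₀inner]
          nlinarith
        calc (((inner ℝ (t • c₀) z : ℝ) + -(t * u) : ℝ) : EReal) ≤ ((0 : ℝ) : EReal) := by
              exact_mod_cast h8
          _ ≤ h z := by rw [EReal.coe_zero]; exact hpos z
    · rw [real_inner_smul_left, hc₀inner]
      have : t * (φ x - u) = |b| + 1 := by
        rw [htdef]
        field_simp
      have habs : b ≤ |b| := le_abs_self b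
      ring_nf at this ⊢
      linarith

theorem stmt_7 (f : V → EReal) (hf0 : ∀ x, 0 ≤ f x) (hlsc : LowerSemicontinuous f)
    (g : V → EReal) (hg : ∀ x, g x = ⨅ γ : {γ : ℝ // 0 < γ}, Qenv γ.1 f x) :
    ERealConvex g ∧ (∀ x, g x ≤ f x) ∧ (∀ x, convEnv f x ≤ g x) := by
  have gnn : ∀ x, (0 : EReal) ≤ g x := by
    intro x; rw [hg]; exact le_iInf fun γ => Qenv_nonneg γ.2.le hf0 x
  have hgf : ∀ x, g x ≤ f x := by
    intro x; rw [hg]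
    exact le_trans (iInf_le (fun γ : {γ : ℝ // 0 < γ} => Qenv γ.1 f x) ⟨1, one_pos⟩) (Qenv_le_f x)
  refine ⟨?_, hgf, ?_⟩
  · -- convexity
    intro x y a b ha hb hab
    rcases eq_or_lt_of_le ha with haz | hap
    · have hb1 : b = 1 := by linarith
      subst hb1
      rw [← haz]
      simp
    rcases eq_or_lt_of_le hb with hbz | hbp
    · have ha1 : a = 1 := by linarith
      subst ha1
      rw [← hbz]
      simp
    by_cases hxt : g x = ⊤
    · rw [hxt, EReal.coe_mul_top_of_pos hap]
      have h2 : (0 : EReal) ≤ (b : EReal) * g y :=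
        mul_nonneg (by exact_mod_cast hb) (gnn y)
      rw [EReal.top_add_of_ne_bot (by intro hc; rw [hc] at h2; simp at h2)]
      exact le_top
    by_cases hyt : g y = ⊤
    · rw [hyt, EReal.coe_mul_top_of_pos hbp]
      have h2 : (0 : EReal) ≤ (a : EReal) * g x :=
        mul_nonneg (by exact_mod_cast ha) (gnn x)
      rw [EReal.add_top_of_ne_bot (by intro hc; rw [hc] at h2; simp at h2)]
      exact le_top
    have hxnb : g x ≠ ⊥ := by intro hc; have := gnn x; rw [hc] at this; simp at this
    have hynb : g y ≠ ⊥ := by intro hc; have := gnn y; rw [hc] at this; simp at this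
    set p : ℝ := (g x).toReal with hpdef
    set q : ℝ := (g y).toReal with hqdef
    have hpx : ((p : ℝ) : EReal) = g x := EReal.coe_toReal hxt hxnb
    have hqy : ((q : ℝ) : EReal) = g y := EReal.coe_toReal hyt hynb
    suffices hsuf : g (a • x + b • y) ≤ ((a * p + b * q : ℝ) : EReal) by
      refine le_trans hsuf (le_of_eq ?_)
      rw [← hpx, ← hqy, EReal.coe_add, EReal.coe_mul, EReal.coe_mul]
    have claim : ∀ ε : ℝ, 0 < ε → g (a • x + b • y) ≤ ((a * p + b * q + ε : ℝ) : EReal) := by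
      intro ε hε
      have hεx : g x < ((p + ε / 2 : ℝ) : EReal) := by
        rw [← hpx]; exact_mod_cast (by linarith : p < p + ε / 2)
      have hεy : g y < ((q + ε / 2 : ℝ) : EReal) := by
        rw [← hqy]; exact_mod_cast (by linarith : q < q + ε / 2)
      rw [hg x] at hεx
      rw [hg y] at hεy
      obtain ⟨γ₁, hγ₁⟩ := iInf_lt_iff.1 hεx
      obtain ⟨γ₂, hγ₂⟩ := iInf_lt_iff.1 hεy
      set S : ℝ := a * b * ‖x - y‖ ^ 2 with hSdef
      have hS : 0 ≤ S := by positivity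
      set δ : ℝ := ε / (S + 1) with hδdef
      have hδ : 0 < δ := div_pos hε (by linarith)
      set γ : ℝ := min γ₁.1 (min γ₂.1 δ) with hγdef
      have hγpos : 0 < γ := lt_min γ₁.2 (lt_min γ₂.2 hδ)
      have m1 : Qenv γ f x ≤ ((p + ε / 2 : ℝ) : EReal) :=
        le_trans (Qenv_mono hγpos.le (min_le_left _ _) γ₁.2 x) hγ₁.le
      have m2 : Qenv γ f y ≤ ((q + ε / 2 : ℝ) : EReal) :=
        le_trans (Qenv_mono hγpos.le (le_trans (min_le_right _ _) (min_le_left _ _)) γ₂.2 y)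
          hγ₂.le
      have hcombo := Qenv_combo hγpos.le ha hb hab m1 m2
      have hstep : g (a • x + b • y) ≤ Qenv γ f (a • x + b • y) := by
        rw [hg]
        exact iInf_le (fun γ' : {γ' : ℝ // 0 < γ'} => Qenv γ'.1 f (a • x + b • y)) ⟨γ, hγpos⟩
      refine le_trans (le_trans hstep hcombo) ?_
      have hγδ : γ ≤ δ := le_trans (min_le_right _ _) (min_le_right _ _)
      have f1 : γ * S ≤ δ * S := mul_le_mul_of_nonneg_right hγδ hS
      have f2 : δ * (S + 1) = ε := by rw [hδdef]; exact div_mul_cancel₀ _ (by linarith)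
      have : a * (p + ε / 2) + b * (q + ε / 2) + γ / 2 * S ≤ a * p + b * q + ε := by
        nlinarith
      exact_mod_cast this
    by_contra hcon
    push_neg at hcon
    obtain ⟨m, h1m, h2m⟩ := EReal.exists_between_coe_real hcon
    have hmr : a * p + b * q < m := by exact_mod_cast h1m
    have := claim (m - (a * p + b * q)) (by linarith)
    rw [show (a * p + b * q + (m - (a * p + b * q)) : ℝ) = m by ring] at this
    exact absurd (lt_of_lt_of_le h2m this) (lt_irrefl _)
  · -- convEnv f ≤ g
    intro x
    refine iSup_le ?_
    rintro ⟨h, hlsc', hconv', hle'⟩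
    dsimp only
    have hmax : h x ≤ max (h x) 0 := le_max_left _ _
    refine le_trans hmax ?_
    have hlsc'' : LowerSemicontinuous (fun z => max (h z) 0) := by
      intro z0 ylt hylt
      rcases lt_max_iff.1 hylt with hc | hc
      · exact (hlsc' z0 ylt hc).mono fun w hw => lt_max_iff.2 (Or.inl hw)
      · exact Filter.Eventually.of_forall fun w => lt_max_iff.2 (Or.inr hc)
    have hconv'' : ERealConvex (fun z => max (h z) 0) := by
      intro x1 y1 a b ha hb hab
      refine max_le ?_ ?_
      · refine le_trans (hconv' x1 y1 a b ha hb hab) ?_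
        exact add_le_add
          (mul_le_mul_of_nonneg_left (le_max_left _ _) (by exact_mod_cast ha))
          (mul_le_mul_of_nonneg_left (le_max_left _ _) (by exact_mod_cast hb))
      · exact add_nonneg
          (mul_nonneg (by exact_mod_cast ha) (le_max_right _ _))
          (mul_nonneg (by exact_mod_cast hb) (le_max_right _ _))
    have hle'' : ∀ z, max (h z) 0 ≤ f z := fun z => max_le (hle' z) (hf0 z)
    have hpos'' : ∀ z : V, (0 : EReal) ≤ max (h z) 0 := fun z => le_max_right _ _
    rw [hg]
    refine le_iInf fun γ => ?_
    refine ereal_le_of_forall_real_lt fun r hr => ?_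
    obtain ⟨c, β, hmin, hrb⟩ := exists_affine_minorant_s7 hlsc'' hconv'' hpos'' hr
    have hminf : ∀ z, (((inner ℝ c z : ℝ) + β : ℝ) : EReal) ≤ f z := fun z =>
      le_trans (hmin z) (hle'' z)
    have hq := Qenv_affine γ.2 c β hminf x
    exact le_trans (by exact_mod_cast hrb.le) hq
end

section
/- Let f : V → [0,∞], let A : V → W be a bounded linear operator between real separable Hilbert spaces, let d ∈ W, and define J(x) = f(x) + (1/2)‖Ax − d‖² and J_γ(x) = Q_γ(f)(x) + (1/2)‖Ax − d‖². If γ > 0 satisfies ‖Ax‖² ≥ γ‖x‖² for all x ∈ V (i.e. A*A ≽ γI), then J_γ is convex, lower semicontinuous, and J_γ(x) ≤ J**(x) for all x ∈ V, where J** is the lower semicontinuous convex envelope of J. -/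
variable {V : Type*} [NormedAddCommGroup V] [InnerProductSpace ℝ V] [CompleteSpace V]
  [TopologicalSpace.SeparableSpace V]

/-- `J(x) = f(x) + (1/2)‖Ax − d‖²`. -/
noncomputable def Jfun {W : Type*} [NormedAddCommGroup W] [InnerProductSpace ℝ W]
    (f : V → EReal) (A : V →L[ℝ] W) (d : W) (x : V) : EReal :=
  f x + ((1 / 2 * ‖A x - d‖ ^ 2 : ℝ) : EReal)

/-- `J_γ(x) = Q_γ(f)(x) + (1/2)‖Ax − d‖²`. -/
noncomputable def Jgamma {W : Type*} [NormedAddCommGroup W] [InnerProductSpace ℝ W]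
    (γ : ℝ) (f : V → EReal) (A : V →L[ℝ] W) (d : W) (x : V) : EReal :=
  Qenv γ f x + ((1 / 2 * ‖A x - d‖ ^ 2 : ℝ) : EReal)

lemma ereal_iSup_add {ι : Sort*} [Nonempty ι] (g : ι → EReal) (c : ℝ) :
    (⨆ i, g i) + (c : EReal) = ⨆ i, (g i + (c : EReal)) := by
  apply le_antisymm
  · have h1 : (⨆ i, g i) ≤ (⨆ i, (g i + (c : EReal))) - (c : EReal) := by
      apply iSup_le; intro i
      have h3 := add_le_add_left (le_iSup (fun j => g j + (c : EReal)) i) ((-c : ℝ) : EReal)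
      have h4 : g i + (c : EReal) + ((-c : ℝ) : EReal) = g i := by
        rw [EReal.coe_neg, ← sub_eq_add_neg, EReal.add_sub_cancel_right]
      rw [h4] at h3
      calc g i ≤ (⨆ j, (g j + (c:EReal))) + ((-c:ℝ):EReal) := h3
        _ = (⨆ j, (g j + (c:EReal))) - (c:EReal) := by
            rw [EReal.coe_neg, ← sub_eq_add_neg]
    calc (⨆ i, g i) + (c : EReal)
        ≤ ((⨆ i, (g i + (c:EReal))) - (c:EReal)) + (c:EReal) := add_le_add_left h1 _
      _ = ⨆ i, (g i + (c:EReal)) := EReal.sub_add_cancel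
  · exact iSup_le fun i => add_le_add_left (le_iSup g i) _

lemma quad_comb {E : Type*} [NormedAddCommGroup E] [InnerProductSpace ℝ E]
    (a b : ℝ) (hab : a + b = 1) (x y c : E) :
    ‖a • x + b • y - c‖ ^ 2 = a * ‖x - c‖ ^ 2 + b * ‖y - c‖ ^ 2 - a * b * ‖x - y‖ ^ 2 := by
  have hc : a • c + b • c = c := by rw [← add_smul, hab, one_smul]
  have h1 : a • x + b • y - c = a • (x - c) + b • (y - c) := by
    have h : a • (x - c) + b • (y - c) = a • x + b • y - (a • c + b • c) := by
      rw [smul_sub, smul_sub]; abel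
    rw [h, hc]
  have h2 : x - y = (x - c) - (y - c) := by abel
  have h3 : ‖(x - c) - (y - c)‖ ^ 2
      = ‖x - c‖ ^ 2 - 2 * inner ℝ (x - c) (y - c) + ‖y - c‖ ^ 2 := norm_sub_sq_real _ _
  rw [h1, h2, norm_add_sq_real, h3, real_inner_smul_left, real_inner_smul_right,
    norm_smul, norm_smul, mul_pow, mul_pow, Real.norm_eq_abs, Real.norm_eq_abs, sq_abs, sq_abs]
  linear_combination (a * ‖x - c‖ ^ 2 + b * ‖y - c‖ ^ 2) * hab

theorem stmt_13 {W : Type*} [NormedAddCommGroup W] [InnerProductSpace ℝ W] [CompleteSpace W]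
    [TopologicalSpace.SeparableSpace W]
    (f : V → EReal) (hf0 : ∀ x, 0 ≤ f x) (A : V →L[ℝ] W) (d : W)
    (γ : ℝ) (hγ : 0 < γ) (hA : ∀ x : V, γ * ‖x‖ ^ 2 ≤ ‖A x‖ ^ 2) :
    ERealConvex (Jgamma γ f A d) ∧
    LowerSemicontinuous (Jgamma γ f A d) ∧
    ∀ x : V, Jgamma γ f A d x ≤ convEnv (Jfun f A d) x := by
  classical
  set P := {p : ℝ × V // ∀ z : V, ((p.1 - γ / 2 * ‖z - p.2‖ ^ 2 : ℝ) : EReal) ≤ f z} with hPdef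
  haveI : Nonempty P := by
    refine ⟨⟨(0, 0), fun z => ?_⟩⟩
    refine le_trans (EReal.coe_nonpos.2 ?_) (hf0 z)
    show (0:ℝ) - γ / 2 * ‖z - ((0:ℝ), (0:V)).2‖ ^ 2 ≤ 0
    have h : (0:ℝ) ≤ γ / 2 * ‖z - ((0:ℝ), (0:V)).2‖ ^ 2 := by positivity
    linarith
  have hQ : ∀ x : V, Qenv γ f x
      = ⨆ p : P, ((p.1.1 - γ / 2 * ‖x - p.1.2‖ ^ 2 : ℝ) : EReal) := by
    intro x
    have hset : {v : EReal | ∃ α : ℝ, ∃ y : V,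
        (∀ z : V, ((α - γ / 2 * ‖z - y‖ ^ 2 : ℝ) : EReal) ≤ f z) ∧
          v = ((α - γ / 2 * ‖x - y‖ ^ 2 : ℝ) : EReal)}
        = Set.range (fun p : P => ((p.1.1 - γ / 2 * ‖x - p.1.2‖ ^ 2 : ℝ) : EReal)) := by
      ext v
      constructor
      · rintro ⟨α, y, h, rfl⟩; exact ⟨⟨(α, y), h⟩, rfl⟩
      · rintro ⟨⟨⟨α, y⟩, h⟩, rfl⟩; exact ⟨α, y, h, rfl⟩
    rw [Qenv, hset, sSup_range]
  have hJ : ∀ x : V, Jgamma γ f A d x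
      = ⨆ p : P, ((p.1.1 - γ / 2 * ‖x - p.1.2‖ ^ 2 + 1 / 2 * ‖A x - d‖ ^ 2 : ℝ) : EReal) := by
    intro x
    rw [Jgamma, hQ, ereal_iSup_add]
    exact iSup_congr fun p => (EReal.coe_add _ _).symm
  -- convexity of the real integrand
  have hpsi : ∀ p : P, ∀ x y : V, ∀ a b : ℝ, 0 ≤ a → 0 ≤ b → a + b = 1 →
      (p.1.1 - γ / 2 * ‖a • x + b • y - p.1.2‖ ^ 2 + 1 / 2 * ‖A (a • x + b • y) - d‖ ^ 2 : ℝ)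
        ≤ a * (p.1.1 - γ / 2 * ‖x - p.1.2‖ ^ 2 + 1 / 2 * ‖A x - d‖ ^ 2)
          + b * (p.1.1 - γ / 2 * ‖y - p.1.2‖ ^ 2 + 1 / 2 * ‖A y - d‖ ^ 2) := by
    intro p x y a b ha hb hab
    have hV := quad_comb a b hab x y p.1.2
    have hAc : A (a • x + b • y) = a • A x + b • A y := by
      rw [map_add, map_smul, map_smul]
    have hW : ‖A (a • x + b • y) - d‖ ^ 2
        = a * ‖A x - d‖ ^ 2 + b * ‖A y - d‖ ^ 2 - a * b * ‖A x - A y‖ ^ 2 := by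
      rw [hAc]; exact quad_comb a b hab (A x) (A y) d
    have hxy : γ * ‖x - y‖ ^ 2 ≤ ‖A x - A y‖ ^ 2 := by
      have := hA (x - y)
      rwa [map_sub] at this
    have key : a * b * (γ * ‖x - y‖ ^ 2) ≤ a * b * ‖A x - A y‖ ^ 2 :=
      mul_le_mul_of_nonneg_left hxy (mul_nonneg ha hb)
    have habα : a * p.1.1 + b * p.1.1 = p.1.1 := by rw [← add_mul, hab, one_mul]
    rw [hV, hW]
    nlinarith [key, habα]
  have hconv : ERealConvex (Jgamma γ f A d) := by
    intro x y a b ha hb hab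
    rw [hJ, hJ x, hJ y]
    apply iSup_le
    intro p
    calc ((p.1.1 - γ / 2 * ‖a • x + b • y - p.1.2‖ ^ 2
            + 1 / 2 * ‖A (a • x + b • y) - d‖ ^ 2 : ℝ) : EReal)
        ≤ ((a * (p.1.1 - γ / 2 * ‖x - p.1.2‖ ^ 2 + 1 / 2 * ‖A x - d‖ ^ 2)
            + b * (p.1.1 - γ / 2 * ‖y - p.1.2‖ ^ 2 + 1 / 2 * ‖A y - d‖ ^ 2) : ℝ) : EReal) :=
          EReal.coe_le_coe_iff.2 (hpsi p x y a b ha hb hab)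
      _ = (a : EReal) * ((p.1.1 - γ / 2 * ‖x - p.1.2‖ ^ 2 + 1 / 2 * ‖A x - d‖ ^ 2 : ℝ) : EReal)
            + (b : EReal) * ((p.1.1 - γ / 2 * ‖y - p.1.2‖ ^ 2 + 1 / 2 * ‖A y - d‖ ^ 2 : ℝ) : EReal) := by
          rw [EReal.coe_add, EReal.coe_mul, EReal.coe_mul]
      _ ≤ (a : EReal) * (⨆ p : P, ((p.1.1 - γ / 2 * ‖x - p.1.2‖ ^ 2 + 1 / 2 * ‖A x - d‖ ^ 2 : ℝ) : EReal))
            + (b : EReal) * (⨆ p : P, ((p.1.1 - γ / 2 * ‖y - p.1.2‖ ^ 2 + 1 / 2 * ‖A y - d‖ ^ 2 : ℝ) : EReal)) := by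
          apply add_le_add
          · exact mul_le_mul_of_nonneg_left
              (le_iSup (fun p : P => ((p.1.1 - γ / 2 * ‖x - p.1.2‖ ^ 2 + 1 / 2 * ‖A x - d‖ ^ 2 : ℝ) : EReal)) p)
              (EReal.coe_nonneg.2 ha)
          · exact mul_le_mul_of_nonneg_left
              (le_iSup (fun p : P => ((p.1.1 - γ / 2 * ‖y - p.1.2‖ ^ 2 + 1 / 2 * ‖A y - d‖ ^ 2 : ℝ) : EReal)) p)
              (EReal.coe_nonneg.2 hb)
  have hlsc : LowerSemicontinuous (Jgamma γ f A d) := by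
    have heq : Jgamma γ f A d
        = fun x => ⨆ p : P, ((p.1.1 - γ / 2 * ‖x - p.1.2‖ ^ 2 + 1 / 2 * ‖A x - d‖ ^ 2 : ℝ) : EReal) :=
      funext hJ
    rw [heq]
    apply lowerSemicontinuous_iSup
    intro p
    apply Continuous.lowerSemicontinuous
    apply continuous_coe_real_ereal.comp
    have h1 : Continuous fun x : V => ‖x - p.1.2‖ ^ 2 :=
      ((continuous_id.sub continuous_const).norm).pow 2
    have h2 : Continuous fun x : V => ‖A x - d‖ ^ 2 :=
      ((A.continuous.sub continuous_const).norm).pow 2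
    exact (continuous_const.sub (continuous_const.mul h1)).add (continuous_const.mul h2)
  have hle : ∀ z : V, Jgamma γ f A d z ≤ Jfun f A d z := by
    intro z
    rw [Jgamma, Jfun]
    refine add_le_add_left ?_ _
    rw [hQ]
    apply iSup_le
    intro p
    exact p.2 z
  refine ⟨hconv, hlsc, fun x => ?_⟩
  exact le_iSup_of_le
    (⟨Jgamma γ f A d, hlsc, hconv, hle⟩ :
      {h : V → EReal // LowerSemicontinuous h ∧ ERealConvex h ∧ ∀ z, h z ≤ Jfun f A d z})
    le_rfl
end

section
/- Let f : V → [0,∞], let A : V → W be a bounded linear operator between real separable Hilbert spaces, let d ∈ W, and define J(x) = f(x) + (1/2)‖Ax − d‖² and J_γ(x) = Q_γ(f)(x) + (1/2)‖Ax − d‖² for γ > 0 with ‖Ax‖² ≥ γ‖x‖² for all x ∈ V. If x̂ is a global minimizer of J_γ and f(x̂) = Q_γ(f)(x̂), then x̂ is a global minimizer of J. -/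
variable {V : Type*} [NormedAddCommGroup V] [InnerProductSpace ℝ V] [CompleteSpace V]
  [TopologicalSpace.SeparableSpace V]

theorem stmt_15 {W : Type*} [NormedAddCommGroup W] [InnerProductSpace ℝ W] [CompleteSpace W]
    [TopologicalSpace.SeparableSpace W]
    (f : V → EReal) (hf0 : ∀ x, 0 ≤ f x) (A : V →L[ℝ] W) (d : W)
    (γ : ℝ) (hγ : 0 < γ) (hA : ∀ x : V, γ * ‖x‖ ^ 2 ≤ ‖A x‖ ^ 2)
    (xh : V) (hmin : ∀ y : V, Jgamma γ f A d xh ≤ Jgamma γ f A d y)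
    (htouch : f xh = Qenv γ f xh) :
    ∀ y : V, Jfun f A d xh ≤ Jfun f A d y := by
  have hQle : ∀ y : V, Qenv γ f y ≤ f y := by
    intro y
    apply sSup_le
    rintro v ⟨α, y', hle, rfl⟩
    exact hle y
  intro y
  have h1 : Jfun f A d xh = Jgamma γ f A d xh := by
    simp [Jfun, Jgamma, htouch]
  have h2 : Jgamma γ f A d y ≤ Jfun f A d y :=
    add_le_add (hQle y) le_rfl
  exact h1 ▸ (hmin y).trans h2
end

section
/- Let f : V → [0,∞], let A : V → W be a bounded linear operator between real separable Hilbert spaces, let d ∈ W, and define J(x) = f(x) + (1/2)‖Ax − d‖² and J_γ(x) = Q_γ(f)(x) + (1/2)‖Ax − d‖². If γ > 0 satisfies ‖A‖² ≤ γ (operator norm), then J**(x) ≤ J_γ(x) ≤ J(x) for all x ∈ V, where J** is the lower semicontinuous convex envelope of J. -/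
variable {V : Type*} [NormedAddCommGroup V] [InnerProductSpace ℝ V] [CompleteSpace V]
  [TopologicalSpace.SeparableSpace V]

/-! If `h ≤ J` is lower semicontinuous and convex, then so is
`h + (γ/2)‖·‖² - (1/2)‖A · - d‖²`: the added quadratic is convex exactly because `‖A‖² ≤ γ`.
This function lies below `f + (γ/2)‖·‖²`. A lower semicontinuous convex function that is nowhere
`⊥` is the supremum of its continuous affine minorants (Hahn–Banach applied to its epigraph), and
for an affine minorant `ℓ` of `f + (γ/2)‖·‖²` the function `ℓ - (γ/2)‖·‖²` is one of the quadratic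
minorants `α - (γ/2)‖· - y‖²` of `f` over which `Q_γ(f)` is the supremum. Hence
`h ≤ Q_γ(f) + (1/2)‖A · - d‖² = J_γ`, and `J_γ ≤ J` because `Q_γ(f) ≤ f`. -/

open Set
open scoped RealInnerProductSpace

section ERealConvex

variable {E : Type*} [NormedAddCommGroup E] [InnerProductSpace ℝ E] {φ : E → EReal}

theorem ERealConvex.add_convexOn {p : E → ℝ} (hφ : ERealConvex φ) (hp : ConvexOn ℝ univ p) :
    ERealConvex fun z => φ z + p z := by
  intro x y a b ha hb hab
  have hmul : ∀ {t : ℝ}, 0 ≤ t → ∀ (u : EReal) (r : ℝ),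
      (t : EReal) * (u + r) = t * u + ((t * r : ℝ) : EReal) := fun {t} ht u r => by
    rw [EReal.left_distrib_of_nonneg_of_ne_top (EReal.coe_nonneg.2 ht) (EReal.coe_ne_top t),
      EReal.coe_mul]
  calc φ (a • x + b • y) + p (a • x + b • y)
      ≤ (a * φ x + b * φ y) + ((a * p x + b * p y : ℝ) : EReal) :=
        add_le_add (hφ x y a b ha hb hab)
          (EReal.coe_le_coe_iff.2 (hp.2 trivial trivial ha hb hab))
    _ = a * (φ x + p x) + b * (φ y + p y) := by
        rw [hmul ha, hmul hb, EReal.coe_add]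
        ac_rfl

theorem ERealConvex.convex_epigraph (hφ : ERealConvex φ) :
    Convex ℝ {q : E × ℝ | φ q.1 ≤ q.2} := by
  rintro ⟨x, r⟩ hx ⟨y, t⟩ hy a b ha hb hab
  calc φ (a • x + b • y) ≤ a * φ x + b * φ y := hφ x y a b ha hb hab
    _ ≤ a * r + b * t := add_le_add (mul_le_mul_of_nonneg_left hx (EReal.coe_nonneg.2 ha))
        (mul_le_mul_of_nonneg_left hy (EReal.coe_nonneg.2 hb))
    _ = ((a * r + b * t : ℝ) : EReal) := by push_cast; rfl

/-- On the half-open segment from `x` to `z`, convexity forces the value `⊥`; lower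
semicontinuity carries it to `x`. -/
theorem ERealConvex.eq_bot_of_eq_bot (hconv : ERealConvex φ) (hlsc : LowerSemicontinuous φ)
    {z : E} (hz : φ z = ⊥) (x : E) : φ x = ⊥ := by
  set g : ℝ → E := fun t => (1 - t) • x + t • z
  have hg : Filter.Tendsto g (nhdsWithin 0 (Ioi 0)) (nhds x) := by
    have : Continuous g := by fun_prop
    simpa [g] using this.continuousWithinAt.tendsto (x := 0) (s := Ioi 0)
  have hseg : ∀ᶠ t in nhdsWithin (0 : ℝ) (Ioi 0), g t ∈ φ ⁻¹' Iic ⊥ := by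
    filter_upwards [Ioo_mem_nhdsGT (zero_lt_one' ℝ)] with t ⟨ht0, ht1⟩
    have := hconv x z (1 - t) t (by linarith) ht0.le (by ring)
    rwa [hz, EReal.coe_mul_bot_of_pos ht0, EReal.add_bot] at this
  simpa using (hlsc.isClosed_preimage ⊥).mem_of_tendsto hg hseg

/-- Separating `(x, c)` from the epigraph by a closed hyperplane: a non-vertical hyperplane is the
graph of an affine minorant, while a vertical one separates `x` from the effective domain. -/
theorem ERealConvex.exists_affine_minorant_gt_or_separates_domain (hconv : ERealConvex φ)
    (hlsc : LowerSemicontinuous φ) {x z₀ : E} {c : ℝ} (hc : c < φ x) (hz₀ : φ z₀ < ⊤) :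
    (∃ (L : StrongDual ℝ E) (β : ℝ), (∀ z, ((L z + β : ℝ) : EReal) ≤ φ z) ∧ c < L x + β) ∨
      ∃ (L : StrongDual ℝ E) (u : ℝ), (∀ z, φ z < ⊤ → L z < u) ∧ u < L x := by
  have hclosed : IsClosed {q : E × ℝ | φ q.1 ≤ q.2} :=
    hlsc.isClosed_epigraph.preimage (continuous_fst.prodMk (continuous_coe_real_ereal.comp
      continuous_snd))
  obtain ⟨F, u, hF, hFx⟩ := geometric_hahn_banach_closed_point hconv.convex_epigraph hclosed
    (x := (x, c)) (not_le.2 hc)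
  set L : StrongDual ℝ E := F.comp (.inl ℝ E ℝ)
  set s : ℝ := F (0, 1)
  have hFapply : ∀ z t, F (z, t) = L z + t * s := fun z t => by
    have hzt : (z, t) = ((z, 0) : E × ℝ) + t • ((0 : E), (1 : ℝ)) := by ext <;> simp
    rw [hzt, map_add, map_smul, smul_eq_mul]
    rfl
  have hsep : ∀ z (t : ℝ), φ z ≤ t → L z + t * s < u := fun z t h => hFapply z t ▸ hF (z, t) h
  have hx : u < L x + c * s := hFapply x c ▸ hFx
  obtain ⟨r, hr, -⟩ := EReal.exists_between_coe_real hz₀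
  have hs : s ≤ 0 := by
    by_contra! hs
    set t := max r ((u - L z₀) / s)
    have hlt := hsep z₀ t (hr.le.trans (EReal.coe_le_coe_iff.2 (le_max_left ..)))
    have hge := mul_le_mul_of_nonneg_right (le_max_right r ((u - L z₀) / s)) hs.le
    rw [div_mul_cancel₀ _ hs.ne'] at hge
    linarith
  rcases hs.lt_or_eq with hs | hs
  · have hval : ∀ z, ((-s)⁻¹ • L) z + u / s = (L z - u) / -s := fun z => by
      rw [smul_apply, smul_eq_mul]
      field_simp
      ring
    refine .inl ⟨(-s)⁻¹ • L, u / s, fun z => ?_, ?_⟩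
    · by_contra! hz
      rw [hval] at hz
      have := hsep z _ hz.le
      have hcancel : (L z - u) / -s * s = u - L z := by
        rw [div_neg, neg_mul, div_mul_cancel₀ _ hs.ne]; ring
      linarith
    · rw [hval, lt_div_iff₀ (neg_pos.2 hs)]
      linarith
  · refine .inr ⟨L, u, fun z hz => ?_, by simpa [hs] using hx⟩
    obtain ⟨t, ht, -⟩ := EReal.exists_between_coe_real hz
    simpa [hs] using hsep z t ht.le

theorem ERealConvex.exists_affine_minorant_gt (hconv : ERealConvex φ)
    (hlsc : LowerSemicontinuous φ) (hbot : ∀ z, φ z ≠ ⊥) {x : E} {c : ℝ} (hc : c < φ x) :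
    ∃ (L : StrongDual ℝ E) (β : ℝ), (∀ z, ((L z + β : ℝ) : EReal) ≤ φ z) ∧ c < L x + β := by
  by_cases hdom : ∃ z₀, φ z₀ < ⊤
  swap
  · exact ⟨0, c + 1, fun z => not_lt.1 fun h => hdom ⟨z, h.trans (EReal.coe_lt_top _)⟩, by simp⟩
  obtain ⟨z₀, hz₀⟩ := hdom
  rcases hconv.exists_affine_minorant_gt_or_separates_domain hlsc hc hz₀ with h |
    ⟨L, u, hdom, hux⟩
  · exact h
  obtain ⟨c₀, -, hc₀⟩ := EReal.exists_between_coe_real (bot_lt_iff_ne_bot.2 (hbot z₀))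
  obtain ⟨L₀, β₀, hmin, -⟩ : ∃ (L : StrongDual ℝ E) (β : ℝ),
      (∀ z, ((L z + β : ℝ) : EReal) ≤ φ z) ∧ c₀ < L z₀ + β := by
    refine (hconv.exists_affine_minorant_gt_or_separates_domain hlsc hc₀ hz₀).resolve_right ?_
    rintro ⟨L', u', hdom', hu'⟩
    exact lt_asymm (hdom' z₀ hz₀) hu'
  -- tilt the minorant `L₀ + β₀` by a large multiple of `L - u`, which is negative on the domain
  obtain ⟨T, hT, hTx⟩ := exists_pos_lt_mul (sub_pos.2 hux) (c - (L₀ x + β₀))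
  refine ⟨L₀ + T • L, β₀ - T * u, fun z => ?_, ?_⟩
  · rcases eq_top_or_lt_top (φ z) with h | h
    · simp [h]
    · refine le_trans (EReal.coe_le_coe_iff.2 ?_) (hmin z)
      simp only [add_apply, smul_apply, smul_eq_mul]
      nlinarith [hdom z h]
  · simp only [add_apply, smul_apply, smul_eq_mul]
    linarith

end ERealConvex

theorem Qenv_le {E : Type*} [NormedAddCommGroup E] (γ : ℝ) (f : E → EReal) (x : E) :
    Qenv γ f x ≤ f x :=
  sSup_le fun _ ⟨_, _, hαy, hv⟩ => hv ▸ hαy x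

section QuadraticEnvelope

variable {E : Type*} [NormedAddCommGroup E] [InnerProductSpace ℝ E] {γ : ℝ} {f : E → EReal}

/-- `L + β - (γ/2)‖·‖²` is `α - (γ/2)‖· - y‖²`, where `γ y` is the Riesz representative of `L`. -/
theorem coe_le_Qenv_add_of_affine_le [CompleteSpace E] (hγ : 0 < γ) (L : StrongDual ℝ E) (β : ℝ)
    (h : ∀ z, ((L z + β : ℝ) : EReal) ≤ f z + ((γ / 2 * ‖z‖ ^ 2 : ℝ) : EReal)) (x : E) :
    ((L x + β : ℝ) : EReal) ≤ Qenv γ f x + ((γ / 2 * ‖x‖ ^ 2 : ℝ) : EReal) := by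
  set y := γ⁻¹ • (InnerProductSpace.toDual ℝ E).symm L
  have hquad : ∀ z, (β + γ / 2 * ‖y‖ ^ 2) - γ / 2 * ‖z - y‖ ^ 2
      = L z + β - γ / 2 * ‖z‖ ^ 2 := fun z => by
    have hLz : γ * ⟪z, y⟫ = L z := by
      rw [real_inner_smul_right, ← mul_assoc, mul_inv_cancel₀ hγ.ne', one_mul, real_inner_comm,
        InnerProductSpace.toDual_symm_apply]
    rw [norm_sub_sq_real, ← hLz]
    ring
  have hmem : ((L x + β - γ / 2 * ‖x‖ ^ 2 : ℝ) : EReal) ≤ Qenv γ f x := by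
    refine le_sSup ⟨β + γ / 2 * ‖y‖ ^ 2, y, fun z => ?_, by rw [hquad]⟩
    rw [hquad, EReal.coe_sub]
    exact EReal.sub_le_of_le_add (h z)
  rw [EReal.coe_sub] at hmem
  exact (EReal.sub_le_iff_le_add (.inl (EReal.coe_ne_bot _)) (.inl (EReal.coe_ne_top _))).1 hmem

theorem ERealConvex.le_Qenv_add [CompleteSpace E] {φ : E → EReal} (hγ : 0 < γ)
    (hconv : ERealConvex φ) (hlsc : LowerSemicontinuous φ)
    (hle : ∀ z, φ z ≤ f z + ((γ / 2 * ‖z‖ ^ 2 : ℝ) : EReal)) (x : E) :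
    φ x ≤ Qenv γ f x + ((γ / 2 * ‖x‖ ^ 2 : ℝ) : EReal) := by
  by_cases hbot : ∃ z, φ z = ⊥
  · obtain ⟨z, hz⟩ := hbot
    simp [hconv.eq_bot_of_eq_bot hlsc hz x]
  refine EReal.ge_of_forall_gt_iff_ge.1 fun c hc => ?_
  obtain ⟨L, β, hmin, hcx⟩ := hconv.exists_affine_minorant_gt hlsc (fun z hz => hbot ⟨z, hz⟩) hc
  exact (EReal.coe_le_coe_iff.2 hcx.le).trans
    (coe_le_Qenv_add_of_affine_le hγ L β (fun z => (hmin z).trans (hle z)) x)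

end QuadraticEnvelope

section LeastSquares

variable {E F : Type*} [NormedAddCommGroup E] [InnerProductSpace ℝ E]
  [NormedAddCommGroup F] [InnerProductSpace ℝ F]

theorem norm_smul_add_smul_sq (x y : E) {a b : ℝ} (hab : a + b = 1) :
    ‖a • x + b • y‖ ^ 2 = a * ‖x‖ ^ 2 + b * ‖y‖ ^ 2 - a * b * ‖x - y‖ ^ 2 := by
  rw [norm_add_sq_real, norm_sub_sq_real, norm_smul, norm_smul, real_inner_smul_left,
    real_inner_smul_right, Real.norm_eq_abs, Real.norm_eq_abs, mul_pow, mul_pow, sq_abs, sq_abs]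
  obtain rfl := eq_sub_of_add_eq hab
  ring

theorem convexOn_sq_norm_sub_sq_norm_apply_sub {γ : ℝ} {A : E →L[ℝ] F} (hA : ‖A‖ ^ 2 ≤ γ) (d : F) :
    ConvexOn ℝ univ fun z => γ / 2 * ‖z‖ ^ 2 - 1 / 2 * ‖A z - d‖ ^ 2 := by
  refine ⟨convex_univ, fun x _ y _ a b ha hb hab => ?_⟩
  have hAxy : A (a • x + b • y) - d = a • (A x - d) + b • (A y - d) := by
    rw [map_add, map_smul, map_smul]
    linear_combination (norm := module) hab • d
  have hAsub : (A x - d) - (A y - d) = A (x - y) := by rw [map_sub]; abel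
  have hbound : ‖A (x - y)‖ ^ 2 ≤ γ * ‖x - y‖ ^ 2 :=
    calc ‖A (x - y)‖ ^ 2 ≤ (‖A‖ * ‖x - y‖) ^ 2 := by gcongr; exact A.le_opNorm _
      _ ≤ γ * ‖x - y‖ ^ 2 := by rw [mul_pow]; gcongr
  simp only [smul_eq_mul]
  rw [hAxy, norm_smul_add_smul_sq _ _ hab, norm_smul_add_smul_sq _ _ hab, hAsub]
  nlinarith [mul_nonneg ha hb]

end LeastSquares

theorem le_Jgamma_of_le_Jfun {E F : Type*} [NormedAddCommGroup E] [InnerProductSpace ℝ E]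
    [CompleteSpace E] [NormedAddCommGroup F] [InnerProductSpace ℝ F] {f : E → EReal}
    {A : E →L[ℝ] F} {d : F} {γ : ℝ} (hγ : 0 < γ) (hA : ‖A‖ ^ 2 ≤ γ) {h : E → EReal}
    (hlsc : LowerSemicontinuous h) (hconv : ERealConvex h) (hle : ∀ z, h z ≤ Jfun f A d z)
    (x : E) : h x ≤ Jgamma γ f A d x := by
  set p : E → ℝ := fun z => γ / 2 * ‖z‖ ^ 2 - 1 / 2 * ‖A z - d‖ ^ 2
  have hsplit : ∀ z,
      ((γ / 2 * ‖z‖ ^ 2 : ℝ) : EReal) = ((1 / 2 * ‖A z - d‖ ^ 2 : ℝ) : EReal) + p z :=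
    fun z => by rw [← EReal.coe_add, add_sub_cancel]
  have hφlsc : LowerSemicontinuous fun z => h z + (p z : EReal) :=
    hlsc.add' (continuous_coe_real_ereal.comp (by fun_prop)).lowerSemicontinuous
      fun z => EReal.continuousAt_add (.inr (EReal.coe_ne_bot _)) (.inr (EReal.coe_ne_top _))
  have hφle : ∀ z, h z + (p z : EReal) ≤ f z + ((γ / 2 * ‖z‖ ^ 2 : ℝ) : EReal) := fun z => by
    rw [hsplit, ← add_assoc]
    exact add_le_add_left (hle z) _
  have key := (hconv.add_convexOn (convexOn_sq_norm_sub_sq_norm_apply_sub hA d)).le_Qenv_add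
    hγ hφlsc hφle x
  rw [hsplit, ← add_assoc] at key
  exact (EReal.addLECancellable_coe _).add_le_add_iff_right.1 key

set_option linter.unusedSectionVars false

theorem stmt_16_general {W : Type*} [NormedAddCommGroup W] [InnerProductSpace ℝ W]
    (f : V → EReal) (A : V →L[ℝ] W) (d : W)
    (γ : ℝ) (hγ : 0 < γ) (hA : ‖A‖ ^ 2 ≤ γ) :
    ∀ x : V, convEnv (Jfun f A d) x ≤ Jgamma γ f A d x ∧ Jgamma γ f A d x ≤ Jfun f A d x :=
  fun x => ⟨iSup_le fun h => le_Jgamma_of_le_Jfun hγ hA h.2.1 h.2.2.1 h.2.2.2 x,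
    add_le_add_left (Qenv_le γ f x) _⟩

theorem stmt_16 {W : Type*} [NormedAddCommGroup W] [InnerProductSpace ℝ W] [CompleteSpace W]
    [TopologicalSpace.SeparableSpace W]
    (f : V → EReal) (hf0 : ∀ x, 0 ≤ f x) (A : V →L[ℝ] W) (d : W)
    (γ : ℝ) (hγ : 0 < γ) (hA : ‖A‖ ^ 2 ≤ γ) :
    ∀ x : V, convEnv (Jfun f A d) x ≤ Jgamma γ f A d x ∧ Jgamma γ f A d x ≤ Jfun f A d x :=
  stmt_16_general f A d γ hγ hA
end
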